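/- arXiv:2201.04117 — 8 statements merged into one kernel-verified Lean document; each statement's English description precedes it below -/
import Mathlib

section
/- If (p, n) is a fixed point of T with p ≠ 0 and n > 0, then n satisfies the quadratic equation σ(1−δ_p)·n² − γ_p·n + (1−δ_p) = 0, so n equals one of n^∨ = (γ_p/(2σ(1−δ_p)))·(1 − √(1 − 4σ(1−δ_p)²/γ_p²)) or n^∧ = (γ_p/(2σ(1−δ_p)))·(1 + √(1 − 4σ(1−δ_p)²/γ_p²)); these two values are positive real numbers if and only if γ_p ≥ 2√σ·(1−δ_p). -/
/-- The consumer–resource map `T(p,n)` with group defense (Holling type IV)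
and discrete reproductive pulses. -/
noncomputable def T (δp δn γp γn σ R : ℝ) : ℝ × ℝ → ℝ × ℝ :=
  fun x =>
    (δp * x.1 + γp * x.1 * x.2 / (1 + σ * x.2 ^ 2),
     δn * x.2 * Real.exp (-(γn * x.1) / (1 + σ * x.2 ^ 2))
       + R * x.2 * Real.exp (-x.1) / (1 + x.2))

/-- Interior fixed points: if `(p,n)` is a fixed point of `T` with `p ≠ 0` and `n > 0`,
then `n` solves the quadratic `σ(1-δp)n² - γp n + (1-δp) = 0`, hence equals
`n^∨` or `n^∧` (the quadratic-formula roots); and these two values are positive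
real numbers iff `γp ≥ 2√σ (1-δp)`. -/
theorem interior_fixed_point_quadratic
    (δp δn γp γn σ R : ℝ)
    (hδp0 : 0 < δp) (hδp1 : δp < 1) (hδn0 : 0 < δn) (hδn1 : δn < 1)
    (hγp : 0 < γp) (hγn : 0 < γn) (hσ : 0 < σ) (hR0 : 0 < R)
    (hR : 1 - δn < R) :
    (∀ p n : ℝ, p ≠ 0 → 0 < n → T δp δn γp γn σ R (p, n) = (p, n) →
      σ * (1 - δp) * n ^ 2 - γp * n + (1 - δp) = 0 ∧
      (n = γp / (2 * σ * (1 - δp)) *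
            (1 - Real.sqrt (1 - 4 * σ * (1 - δp) ^ 2 / γp ^ 2)) ∨
       n = γp / (2 * σ * (1 - δp)) *
            (1 + Real.sqrt (1 - 4 * σ * (1 - δp) ^ 2 / γp ^ 2)))) ∧
    ((0 ≤ 1 - 4 * σ * (1 - δp) ^ 2 / γp ^ 2 ∧
      0 < γp / (2 * σ * (1 - δp)) *
            (1 - Real.sqrt (1 - 4 * σ * (1 - δp) ^ 2 / γp ^ 2)) ∧
      0 < γp / (2 * σ * (1 - δp)) *
            (1 + Real.sqrt (1 - 4 * σ * (1 - δp) ^ 2 / γp ^ 2))) ↔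
      2 * Real.sqrt σ * (1 - δp) ≤ γp) := by
  have hA : 0 < 1 - δp := by linarith
  have ha : 0 < σ * (1 - δp) := mul_pos hσ hA
  constructor
  · intro p n hp hn heq
    have hden : 0 < 1 + σ * n ^ 2 := by positivity
    have h1 : δp * p + γp * p * n / (1 + σ * n ^ 2) = p := congrArg Prod.fst heq
    have h2 : δp * p * (1 + σ * n ^ 2) + γp * p * n = p * (1 + σ * n ^ 2) := by
      field_simp at h1; linear_combination p * h1
    have h3 : p * (δp * (1 + σ * n ^ 2) + γp * n) = p * (1 + σ * n ^ 2) := by ring_nf; ring_nf at h2; linarith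
    have h4 : δp * (1 + σ * n ^ 2) + γp * n = 1 + σ * n ^ 2 := mul_left_cancel₀ hp h3
    have hroot : σ * (1 - δp) * n ^ 2 - γp * n + (1 - δp) = 0 := by nlinarith
    refine ⟨hroot, ?_⟩
    -- quadratic formula
    set a := σ * (1 - δp) with ha_def
    have hroot' : a * (n * n) + (-γp) * n + (1 - δp) = 0 := by nlinarith
    have hDsq : discrim a (-γp) (1 - δp) = (2 * a * n + (-γp)) * (2 * a * n + (-γp)) := by
      unfold discrim; nlinarith
    have hD0 : 0 ≤ discrim a (-γp) (1 - δp) := by rw [hDsq]; exact mul_self_nonneg _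
    have hs : discrim a (-γp) (1 - δp) = Real.sqrt (discrim a (-γp) (1 - δp)) *
        Real.sqrt (discrim a (-γp) (1 - δp)) := (Real.mul_self_sqrt hD0).symm
    have := (quadratic_eq_zero_iff (ne_of_gt ha) hs n).mp hroot'
    have hdisc : discrim a (-γp) (1 - δp) = γp ^ 2 - 4 * σ * (1 - δp) ^ 2 := by
      unfold discrim; ring
    have hsqrt_eq : Real.sqrt (1 - 4 * σ * (1 - δp) ^ 2 / γp ^ 2)
        = Real.sqrt (discrim a (-γp) (1 - δp)) / γp := by
      have h5 : 1 - 4 * σ * (1 - δp) ^ 2 / γp ^ 2 = discrim a (-γp) (1 - δp) / γp ^ 2 := by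
        rw [hdisc]; field_simp
      rw [h5, Real.sqrt_div hD0, Real.sqrt_sq hγp.le]
    rcases this with h | h
    · right
      rw [h, hsqrt_eq]
      have : (2 : ℝ) * σ * (1 - δp) ≠ 0 := by positivity
      field_simp
      ring
    · left
      rw [h, hsqrt_eq]
      have : (2 : ℝ) * σ * (1 - δp) ≠ 0 := by positivity
      field_simp
      ring
  · constructor
    · rintro ⟨h1, -, -⟩
      have h2 : 4 * σ * (1 - δp) ^ 2 ≤ γp ^ 2 := by
        have := (div_le_one (by positivity : (0:ℝ) < γp ^ 2)).mp (by linarith)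
        linarith
      have hs := Real.sq_sqrt hσ.le
      have hsn := Real.sqrt_nonneg σ
      nlinarith [sq_nonneg (2 * Real.sqrt σ * (1 - δp) - γp)]
    · intro h
      have hs := Real.sq_sqrt hσ.le
      have hsn := Real.sqrt_nonneg σ
      have h3 : (2 * Real.sqrt σ * (1 - δp)) ^ 2 ≤ γp ^ 2 :=
        pow_le_pow_left₀ (by positivity) h 2
      have h2 : 4 * σ * (1 - δp) ^ 2 ≤ γp ^ 2 := by nlinarith [h3, hs]
      have hpos : 0 < 4 * σ * (1 - δp) ^ 2 / γp ^ 2 := by positivity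
      have hD' : 0 ≤ 1 - 4 * σ * (1 - δp) ^ 2 / γp ^ 2 := by
        have := (div_le_one (by positivity : (0:ℝ) < γp ^ 2)).mpr h2
        linarith
      have hlt1 : Real.sqrt (1 - 4 * σ * (1 - δp) ^ 2 / γp ^ 2) < 1 := by
        have : 1 - 4 * σ * (1 - δp) ^ 2 / γp ^ 2 < 1 := by linarith
        calc Real.sqrt (1 - 4 * σ * (1 - δp) ^ 2 / γp ^ 2) < Real.sqrt 1 :=
              Real.sqrt_lt_sqrt hD' this
          _ = 1 := Real.sqrt_one
      have hsn' := Real.sqrt_nonneg (1 - 4 * σ * (1 - δp) ^ 2 / γp ^ 2)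
      refine ⟨hD', ?_, ?_⟩
      · apply mul_pos (by positivity)
        linarith
      · apply mul_pos (by positivity)
        linarith
end

section
/- The Jacobian matrix of the map T at the resource-only equilibrium (0, n*) is lower triangular (its upper-right entry vanishes), and its diagonal entries, hence its eigenvalues, are λ₁ = δ_p + γ_p·n*/(1+σ·n*²) and λ₂ = δ_n + R/(1+n*)², where moreover δ_n + R/(1+n*)² = δ_n + (1−δ_n)²/R. -/
/-- Resource carrying capacity `n* = R/(1-δn) - 1`. -/
noncomputable def nstar (δn R : ℝ) : ℝ := R / (1 - δn) - 1

/-- The Jacobian of `T` at the resource-only equilibrium `(0, n*)` is lower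
triangular (the upper-right entry vanishes), with diagonal entries (eigenvalues)
`λ₁ = δp + γp n*/(1+σ n*²)` and `λ₂ = δn + R/(1+n*)²`; moreover
`δn + R/(1+n*)² = δn + (1-δn)²/R`. -/
theorem jacobian_at_carrying_capacity
    (δp δn γp γn σ R : ℝ)
    (hδp0 : 0 < δp) (hδp1 : δp < 1) (hδn0 : 0 < δn) (hδn1 : δn < 1)
    (hγp : 0 < γp) (hγn : 0 < γn) (hσ : 0 < σ) (hR0 : 0 < R)
    (hR : 1 - δn < R) :
    (∃ c : ℝ, ∀ v : ℝ × ℝ,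
      fderiv ℝ (T δp δn γp γn σ R) (0, nstar δn R) v =
        ((δp + γp * nstar δn R / (1 + σ * (nstar δn R) ^ 2)) * v.1,
         c * v.1 + (δn + R / (1 + nstar δn R) ^ 2) * v.2)) ∧
    δn + R / (1 + nstar δn R) ^ 2 = δn + (1 - δn) ^ 2 / R := by
  have hδn' : (0:ℝ) < 1 - δn := by linarith
  set n : ℝ := nstar δn R with hn
  have hn' : n = R / (1 - δn) - 1 := by rw [hn, nstar]
  have h1n : 1 + n = R / (1 - δn) := by rw [hn']; ring
  have h1npos : 0 < 1 + n := by rw [h1n]; positivity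
  have h1nne : (1:ℝ) + n ≠ 0 := ne_of_gt h1npos
  have hqne : (1:ℝ) + σ * n ^ 2 ≠ 0 := by positivity
  set x₀ : ℝ × ℝ := ((0:ℝ), n) with hx₀
  have hsq : HasFDerivAt (𝕜 := ℝ) (fun x : ℝ × ℝ => x.2 ^ 2)
      (n • ContinuousLinearMap.snd ℝ ℝ ℝ + n • ContinuousLinearMap.snd ℝ ℝ ℝ) x₀ := by
    have h := (hasFDerivAt_snd (𝕜 := ℝ) (E := ℝ) (F := ℝ) (p := x₀)).mul (hasFDerivAt_snd (𝕜 := ℝ) (E := ℝ) (F := ℝ) (p := x₀))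
    have e : (fun x : ℝ × ℝ => x.2 ^ 2) = Prod.snd * Prod.snd := by funext x; simp [pow_two]
    rw [e]; exact h
  have hden : HasFDerivAt (𝕜 := ℝ) (fun x : ℝ × ℝ => 1 + σ * x.2 ^ 2) _ x₀ :=
    (hsq.const_mul σ).const_add 1
  have hdenne : (fun x : ℝ × ℝ => 1 + σ * x.2 ^ 2) x₀ ≠ 0 := by simpa [hx₀] using hqne
  have hinv : HasFDerivAt (𝕜 := ℝ) (fun x : ℝ × ℝ => (1 + σ * x.2 ^ 2)⁻¹) _ x₀ :=
    (hasFDerivAt_inv' (𝕜 := ℝ) hdenne).comp x₀ hden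
  have h_f1 : HasFDerivAt (𝕜 := ℝ)
      (fun x : ℝ × ℝ => δp * x.1 + γp * x.1 * x.2 / (1 + σ * x.2 ^ 2)) _ x₀ :=
    (hasFDerivAt_fst.const_mul δp).add
      (((hasFDerivAt_fst.const_mul γp).mul hasFDerivAt_snd).mul hinv)
  have h_g : HasFDerivAt (𝕜 := ℝ) (fun x : ℝ × ℝ => -(γn * x.1) / (1 + σ * x.2 ^ 2)) _ x₀ :=
    ((hasFDerivAt_fst.const_mul γn).neg).mul hinv
  have hinv2 : HasFDerivAt (𝕜 := ℝ) (fun x : ℝ × ℝ => (1 + x.2)⁻¹) _ x₀ :=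
    (hasFDerivAt_inv' (𝕜 := ℝ)
      (show (fun x : ℝ × ℝ => 1 + x.2) x₀ ≠ 0 by simpa [hx₀] using h1nne)).comp x₀
      ((hasFDerivAt_snd (𝕜 := ℝ) (E := ℝ) (F := ℝ) (p := x₀)).const_add 1)
  have h_f2 : HasFDerivAt (𝕜 := ℝ) (fun x : ℝ × ℝ =>
      δn * x.2 * Real.exp (-(γn * x.1) / (1 + σ * x.2 ^ 2))
        + R * x.2 * Real.exp (-x.1) / (1 + x.2)) _ x₀ :=
    ((hasFDerivAt_snd.const_mul δn).mul h_g.exp).add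
      ((((hasFDerivAt_snd.const_mul R).mul hasFDerivAt_fst.neg.exp)).mul hinv2)
  have h_T : HasFDerivAt (T δp δn γp γn σ R) _ x₀ := h_f1.prodMk h_f2
  constructor
  · refine ⟨-(δn * n * γn / (1 + σ * n ^ 2)) - R * n / (1 + n), fun v => ?_⟩
    rw [h_T.fderiv]
    have hx1 : x₀.1 = (0:ℝ) := rfl
    have hx2 : x₀.2 = n := rfl
    simp only [ContinuousLinearMap.prod_apply, ContinuousLinearMap.add_apply,
      ContinuousLinearMap.coe_comp', Function.comp_apply, ContinuousLinearMap.coe_smul',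
      Pi.smul_apply, ContinuousLinearMap.coe_fst', ContinuousLinearMap.coe_snd',
      ContinuousLinearMap.neg_apply, ContinuousLinearMap.mulLeftRight_apply,
      smul_eq_mul, Pi.mul_apply, Pi.neg_apply, hx1, hx2, mul_zero, neg_zero, zero_div, Real.exp_zero]
    refine Prod.ext ?_ ?_
    · show _ = (δp + γp * n / (1 + σ * n ^ 2)) * v.1
      field_simp
      ring
    · show _ = _ * v.1 + (δn + R / (1 + n) ^ 2) * v.2
      field_simp
      ring
  · rw [h1n]
    have hRne : R ≠ 0 := ne_of_gt hR0
    have hdne : (1:ℝ) - δn ≠ 0 := ne_of_gt hδn'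
    field_simp
end

section
/- Define λ₁ = δ_p + γ_p·n*/(1+σ·n*²) and the critical conversion rate γ_p* = (1−δ_p)(1+σ·n*²)/n*. Then λ₁ < 1 if and only if γ_p < γ_p*, λ₁ = 1 if and only if γ_p = γ_p*, and λ₁ > 1 if and only if γ_p > γ_p*. In particular, when γ_p < γ_p* both eigenvalues λ₁ and λ₂ = δ_n + (1−δ_n)²/R of the Jacobian of T at (0, n*) lie strictly inside the unit interval (0,1), so the spectral radius of the Jacobian at (0, n*) is strictly less than 1. -/
/-- Critical conversion rate `γp* = (1-δp)(1+σ n*²)/n*`. -/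
noncomputable def gammaPstar (δp δn σ R : ℝ) : ℝ :=
  (1 - δp) * (1 + σ * (nstar δn R) ^ 2) / nstar δn R

/-- Eigenvalue `λ₁ = δp + γp n*/(1+σ n*²)` of the Jacobian at `(0, n*)`. -/
noncomputable def lambda1 (δp δn γp σ R : ℝ) : ℝ :=
  δp + γp * nstar δn R / (1 + σ * (nstar δn R) ^ 2)

/-- Trichotomy for `λ₁` against `1` in terms of `γp` against `γp*`; when
`γp < γp*` both eigenvalues `λ₁` and `λ₂ = δn + (1-δn)²/R` of the Jacobian of
`T` at `(0, n*)` lie in `(0,1)`, so its spectral radius is `< 1`. -/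
theorem lambda1_trichotomy_and_stability
    (δp δn γp σ R : ℝ)
    (hδp0 : 0 < δp) (hδp1 : δp < 1) (hδn0 : 0 < δn) (hδn1 : δn < 1)
    (hγp : 0 < γp) (hσ : 0 < σ) (hR0 : 0 < R) (hR : 1 - δn < R) :
    (lambda1 δp δn γp σ R < 1 ↔ γp < gammaPstar δp δn σ R) ∧
    (lambda1 δp δn γp σ R = 1 ↔ γp = gammaPstar δp δn σ R) ∧
    (1 < lambda1 δp δn γp σ R ↔ gammaPstar δp δn σ R < γp) ∧
    (γp < gammaPstar δp δn σ R →
      0 < lambda1 δp δn γp σ R ∧ lambda1 δp δn γp σ R < 1 ∧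
      0 < δn + (1 - δn) ^ 2 / R ∧ δn + (1 - δn) ^ 2 / R < 1 ∧
      max (lambda1 δp δn γp σ R) (δn + (1 - δn) ^ 2 / R) < 1) := by
  have hδ : (0:ℝ) < 1 - δn := by linarith
  set n := nstar δn R with hn_def
  have hn : 0 < n := by
    have : (1:ℝ) < R / (1 - δn) := (one_lt_div hδ).mpr hR
    simp only [hn_def, nstar]; linarith
  set D := 1 + σ * n ^ 2 with hD_def
  have hD : (0:ℝ) < D := by positivity
  have hlam : lambda1 δp δn γp σ R = δp + γp * n / D := rfl
  have hgs : gammaPstar δp δn σ R = (1 - δp) * D / n := rfl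
  have e1 : γp * n / D < 1 - δp ↔ γp * n < (1 - δp) * D := div_lt_iff₀ hD
  have e2 : γp < (1 - δp) * D / n ↔ γp * n < (1 - δp) * D := lt_div_iff₀ hn
  have f1 : 1 - δp < γp * n / D ↔ (1 - δp) * D < γp * n := lt_div_iff₀ hD
  have f2 : (1 - δp) * D / n < γp ↔ (1 - δp) * D < γp * n := div_lt_iff₀ hn
  have g1 : γp * n / D = 1 - δp ↔ γp * n = (1 - δp) * D := div_eq_iff (ne_of_gt hD)
  have g2 : γp = (1 - δp) * D / n ↔ γp * n = (1 - δp) * D := by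
    rw [eq_div_iff (ne_of_gt hn)]
  have h1 : lambda1 δp δn γp σ R < 1 ↔ γp < gammaPstar δp δn σ R := by
    rw [hlam, hgs, e2, ← e1]; constructor <;> intro h <;> linarith
  have h2 : lambda1 δp δn γp σ R = 1 ↔ γp = gammaPstar δp δn σ R := by
    rw [hlam, hgs, g2, ← g1]; constructor <;> intro h <;> linarith
  have h3 : 1 < lambda1 δp δn γp σ R ↔ gammaPstar δp δn σ R < γp := by
    rw [hlam, hgs, f2, ← f1]; constructor <;> intro h <;> linarith
  refine ⟨h1, h2, h3, fun hlt => ?_⟩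
  have hl1 : lambda1 δp δn γp σ R < 1 := h1.mpr hlt
  have hl0 : 0 < lambda1 δp δn γp σ R := by
    have : 0 < γp * n / D := by positivity
    rw [hlam]; linarith
  have hb : 0 < δn + (1 - δn) ^ 2 / R := by positivity
  have hc : δn + (1 - δn) ^ 2 / R < 1 := by
    have : (1 - δn) ^ 2 / R < 1 - δn := by
      rw [div_lt_iff₀ hR0]; nlinarith
    linarith
  exact ⟨hl0, hl1, hb, hc, max_lt hl1 hc⟩
end

section
/- Suppose σ·n*² > 1 and γ_p = γ_p* = (1−δ_p)(1+σ·n*²)/n*. Then γ_p ≥ 2√σ·(1−δ_p) and n* equals the larger root n^∧ = (γ_p/(2σ(1−δ_p)))·(1 + √(1 − 4σ(1−δ_p)²/γ_p²)) of the quadratic σ(1−δ_p)·n² − γ_p·n + (1−δ_p) = 0; that is, at the critical parameter value γ_p = γ_p* the resource-only equilibrium coincides with the interior equilibrium branch (transcritical bifurcation point). -/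
/-- At the critical conversion rate `γp = γp* = (1-δp)(1+σ n*²)/n*` (with
`σ n*² > 1`), one has `γp ≥ 2√σ (1-δp)` and the carrying capacity `n*` equals
the larger root `n^∧` of the interior-equilibrium quadratic
`σ(1-δp)n² - γp n + (1-δp) = 0` (transcritical bifurcation point). -/
theorem transcritical_bifurcation_point
    (δp δn γp σ R : ℝ)
    (hδp0 : 0 < δp) (hδp1 : δp < 1) (hδn0 : 0 < δn) (hδn1 : δn < 1)
    (hγp : 0 < γp) (hσ : 0 < σ) (hR0 : 0 < R) (hR : 1 - δn < R)
    (hgd : 1 < σ * (nstar δn R) ^ 2)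
    (hcrit : γp = (1 - δp) * (1 + σ * (nstar δn R) ^ 2) / nstar δn R) :
    2 * Real.sqrt σ * (1 - δp) ≤ γp ∧
    nstar δn R =
      γp / (2 * σ * (1 - δp)) *
        (1 + Real.sqrt (1 - 4 * σ * (1 - δp) ^ 2 / γp ^ 2)) := by
  set n := nstar δn R with hn
  have hδn' : 0 < 1 - δn := by linarith
  have hn0 : 0 < n := by
    have : 1 < R / (1 - δn) := (one_lt_div hδn').mpr hR
    simp only [hn, nstar]; linarith
  have hδp' : 0 < 1 - δp := by linarith
  have hden : (0:ℝ) < 1 + σ * n ^ 2 := by nlinarith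
  have hs : Real.sqrt σ ^ 2 = σ := Real.sq_sqrt hσ.le
  have hs0 : 0 ≤ Real.sqrt σ := Real.sqrt_nonneg σ
  constructor
  · rw [hcrit, le_div_iff₀ hn0]
    have key : 0 ≤ σ * n ^ 2 - 2 * Real.sqrt σ * n + 1 := by
      nlinarith [sq_nonneg (Real.sqrt σ * n - 1)]
    nlinarith [mul_nonneg hδp'.le key]
  · have harg : 1 - 4 * σ * (1 - δp) ^ 2 / γp ^ 2
        = ((σ * n ^ 2 - 1) / (1 + σ * n ^ 2)) ^ 2 := by
      rw [hcrit]
      field_simp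
      ring
    rw [harg, Real.sqrt_sq (div_nonneg (by linarith) hden.le), hcrit]
    field_simp
    ring
end

section
/- If n > n* = R/(1−δ_n) − 1 and p ≥ 0, then the per-capita resource growth factor satisfies δ_n·exp(−γ_n·p/(1+σ·n²)) + R·exp(−p)/(1+n) < 1; hence the second coordinate of T(p,n) is strictly less than n whenever the resource density exceeds its carrying capacity. -/
/-- Above carrying capacity `n* = R/(1-δn) - 1` the per-capita resource growth
factor is `< 1`, so the resource coordinate of `T(p,n)` is strictly less than `n`
whenever `n > n*` and `p ≥ 0`. -/
theorem resource_declines_above_carrying_capacity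
    (δp δn γp γn σ R : ℝ)
    (hδp0 : 0 < δp) (hδp1 : δp < 1) (hδn0 : 0 < δn) (hδn1 : δn < 1)
    (hγp : 0 < γp) (hγn : 0 < γn) (hσ : 0 < σ) (hR0 : 0 < R)
    (hR : 1 - δn < R) :
    ∀ p n : ℝ, 0 ≤ p → R / (1 - δn) - 1 < n →
      (δn * Real.exp (-(γn * p) / (1 + σ * n ^ 2))
        + R * Real.exp (-p) / (1 + n) < 1) ∧
      (T δp δn γp γn σ R (p, n)).2 < n := by
  intro p n hp hn
  have h1δ : 0 < 1 - δn := by linarith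
  have hstar : (1 : ℝ) < R / (1 - δn) := (one_lt_div h1δ).mpr (by linarith)
  have hn0 : 0 < n := by linarith
  have h1n : 0 < 1 + n := by linarith
  have hden : 0 < 1 + σ * n ^ 2 := by positivity
  -- exp bounds
  have he1 : Real.exp (-(γn * p) / (1 + σ * n ^ 2)) ≤ 1 := by
    apply Real.exp_le_one_iff.mpr
    apply div_nonpos_of_nonpos_of_nonneg
    · simp; positivity
    · linarith
  have he2 : Real.exp (-p) ≤ 1 := Real.exp_le_one_iff.mpr (by linarith)
  have he2' : 0 < Real.exp (-p) := Real.exp_pos _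
  have he1' : 0 < Real.exp (-(γn * p) / (1 + σ * n ^ 2)) := Real.exp_pos _
  have hRn : R / (1 + n) < 1 - δn := by
    rw [div_lt_iff₀ h1n]
    have : R / (1 - δn) < 1 + n := by linarith
    calc R = (1 - δn) * (R / (1 - δn)) := by field_simp
    _ < (1 - δn) * (1 + n) := by apply mul_lt_mul_of_pos_left this h1δ
  have key : δn * Real.exp (-(γn * p) / (1 + σ * n ^ 2))
      + R * Real.exp (-p) / (1 + n) < 1 := by
    have h1 : δn * Real.exp (-(γn * p) / (1 + σ * n ^ 2)) ≤ δn := by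
      nlinarith
    have h2 : R * Real.exp (-p) / (1 + n) ≤ R / (1 + n) := by
      gcongr
      nlinarith
    linarith
  refine ⟨key, ?_⟩
  simp only [T]
  have : δn * n * Real.exp (-(γn * p) / (1 + σ * n ^ 2))
      + R * n * Real.exp (-p) / (1 + n)
      = n * (δn * Real.exp (-(γn * p) / (1 + σ * n ^ 2))
        + R * Real.exp (-p) / (1 + n)) := by ring
  rw [this]
  nlinarith
end

section
/- For every orbit (p_m, n_m) = T^m(p₀, n₀) starting in the first quadrant (p₀ ≥ 0, n₀ ≥ 0), one has n_{m+1} ≤ h(n_m) for all m, where h(n) = n·(δ_n + R/(1+n)) is increasing on [0, ∞); consequently limsup_{m→∞} n_m ≤ n* = R/(1−δ_n) − 1, i.e. the interval [0, n*] attracts the resource coordinate of every orbit. -/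
/-- Along every orbit in the first quadrant, `n_{m+1} ≤ h(n_m)` where
`h(n) = n (δn + R/(1+n))` is increasing on `[0,∞)`; consequently
`limsup n_m ≤ n* = R/(1-δn) - 1`: the interval `[0,n*]` attracts the resource
coordinate of every orbit. -/
theorem resource_attracted_to_carrying_interval
    (δp δn γp γn σ R : ℝ)
    (hδp0 : 0 < δp) (hδp1 : δp < 1) (hδn0 : 0 < δn) (hδn1 : δn < 1)
    (hγp : 0 < γp) (hγn : 0 < γn) (hσ : 0 < σ) (hR0 : 0 < R)
    (hR : 1 - δn < R) :
    MonotoneOn (fun n : ℝ => n * (δn + R / (1 + n))) (Set.Ici 0) ∧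
    ∀ p₀ n₀ : ℝ, 0 ≤ p₀ → 0 ≤ n₀ →
      (∀ m : ℕ,
        ((T δp δn γp γn σ R)^[m + 1] (p₀, n₀)).2 ≤
          ((T δp δn γp γn σ R)^[m] (p₀, n₀)).2 *
            (δn + R / (1 + ((T δp δn γp γn σ R)^[m] (p₀, n₀)).2))) ∧
      Filter.limsup (fun m : ℕ => ((T δp δn γp γn σ R)^[m] (p₀, n₀)).2)
        Filter.atTop ≤ R / (1 - δn) - 1 := by
  have hδn' : 0 < 1 - δn := by linarith
  have hmono : MonotoneOn (fun n : ℝ => n * (δn + R / (1 + n))) (Set.Ici 0) := by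
    intro x hx y hy hxy
    simp only [Set.mem_Ici] at hx hy
    have h1x : (0:ℝ) < 1 + x := by linarith
    have h1y : (0:ℝ) < 1 + y := by linarith
    have key : x * R / (1 + x) ≤ y * R / (1 + y) := by
      rw [div_le_div_iff₀ h1x h1y]; nlinarith
    have e1 : x * (δn + R / (1 + x)) = x * δn + x * R / (1 + x) := by ring
    have e2 : y * (δn + R / (1 + y)) = y * δn + y * R / (1 + y) := by ring
    simp only [e1, e2]
    have : x * δn ≤ y * δn := by nlinarith
    linarith
  refine ⟨hmono, fun p₀ n₀ hp₀ hn₀ => ?_⟩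
  set F := T δp δn γp γn σ R with hF
  set a : ℕ → ℝ := fun m => (F^[m] (p₀, n₀)).2 with ha
  have hquad : ∀ m : ℕ, 0 ≤ (F^[m] (p₀, n₀)).1 ∧ 0 ≤ (F^[m] (p₀, n₀)).2 := by
    intro m
    induction m with
    | zero => simpa using ⟨hp₀, hn₀⟩
    | succ m ih =>
      obtain ⟨h1, h2⟩ := ih
      rw [Function.iterate_succ_apply']
      set y := F^[m] (p₀, n₀)
      constructor
      · show 0 ≤ δp * y.1 + γp * y.1 * y.2 / (1 + σ * y.2 ^ 2)
        positivity
      · show 0 ≤ δn * y.2 * Real.exp (-(γn * y.1) / (1 + σ * y.2 ^ 2))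
            + R * y.2 * Real.exp (-y.1) / (1 + y.2)
        positivity
  have hstep : ∀ m : ℕ, a (m + 1) ≤ a m * (δn + R / (1 + a m)) := by
    intro m
    obtain ⟨h1, h2⟩ := hquad m
    show (F^[m+1] (p₀, n₀)).2 ≤ _
    rw [Function.iterate_succ_apply']
    set y := F^[m] (p₀, n₀)
    have hden : (0:ℝ) < 1 + σ * y.2 ^ 2 := by positivity
    have hE1 : Real.exp (-(γn * y.1) / (1 + σ * y.2 ^ 2)) ≤ 1 := by
      rw [Real.exp_le_one_iff]
      apply div_nonpos_of_nonpos_of_nonneg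
      · simp only [neg_nonpos]; positivity
      · linarith
    have hE2 : Real.exp (-y.1) ≤ 1 := by
      rw [Real.exp_le_one_iff]; linarith
    have h1y : (0:ℝ) < 1 + y.2 := by linarith
    show δn * y.2 * Real.exp (-(γn * y.1) / (1 + σ * y.2 ^ 2))
        + R * y.2 * Real.exp (-y.1) / (1 + y.2) ≤ y.2 * (δn + R / (1 + y.2))
    have e : y.2 * (δn + R / (1 + y.2)) = δn * y.2 * 1 + R * y.2 * 1 / (1 + y.2) := by
      ring
    rw [e]
    gcongr <;> first | positivity | exact hE1 | exact hE2
  -- boundedness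
  set M := max n₀ (R / (1 - δn) - 1) with hM
  have hnstar : (0:ℝ) < R / (1 - δn) - 1 := by
    rw [sub_pos, lt_div_iff₀ hδn']; linarith
  have hM0 : (0:ℝ) < M := lt_of_lt_of_le hnstar (le_max_right _ _)
  have hMstar : R / (1 - δn) - 1 ≤ M := le_max_right _ _
  have hhM : M * (δn + R / (1 + M)) ≤ M := by
    have h1M : (0:ℝ) < 1 + M := by linarith
    have : R / (1 + M) ≤ 1 - δn := by
      rw [div_le_iff₀ h1M]
      have : R / (1 - δn) ≤ 1 + M := by linarith
      rw [div_le_iff₀ hδn'] at this; nlinarith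
    nlinarith
  have hbM : ∀ m, a m ≤ M := by
    intro m
    induction m with
    | zero => exact le_max_left _ _
    | succ m ih =>
      calc a (m + 1) ≤ a m * (δn + R / (1 + a m)) := hstep m
        _ ≤ M * (δn + R / (1 + M)) :=
            hmono (Set.mem_Ici.2 (hquad m).2) (Set.mem_Ici.2 hM0.le) ih
        _ ≤ M := hhM
  have hbdd : Filter.IsBoundedUnder (· ≤ ·) Filter.atTop a :=
    Filter.isBoundedUnder_of ⟨M, hbM⟩
  have hcobdd : Filter.IsCoboundedUnder (· ≤ ·) Filter.atTop a :=
    (Filter.isBoundedUnder_of ⟨0, fun m => (hquad m).2⟩ :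
      Filter.IsBoundedUnder (· ≥ ·) Filter.atTop a).isCoboundedUnder_le
  refine ⟨hstep, ?_⟩
  set L := Filter.limsup a Filter.atTop with hL
  show L ≤ R / (1 - δn) - 1
  by_cases hL0 : L < 0
  · linarith
  push_neg at hL0
  have key : ∀ c, L < c → L ≤ c * (δn + R / (1 + c)) := by
    intro c hc
    have hc0 : 0 ≤ c := le_trans hL0 hc.le
    have hev : ∀ᶠ m in Filter.atTop, a m < c :=
      Filter.eventually_lt_of_limsup_lt hc hbdd
    obtain ⟨N, hN⟩ := Filter.eventually_atTop.1 hev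
    have hev2 : ∀ᶠ m in Filter.atTop, a m ≤ c * (δn + R / (1 + c)) := by
      rw [Filter.eventually_atTop]
      refine ⟨N + 1, fun m hm => ?_⟩
      obtain ⟨k, rfl⟩ : ∃ k, m = k + 1 := ⟨m - 1, by omega⟩
      calc a (k + 1) ≤ a k * (δn + R / (1 + a k)) := hstep k
        _ ≤ c * (δn + R / (1 + c)) :=
            hmono (Set.mem_Ici.2 (hquad k).2) (Set.mem_Ici.2 hc0)
              (hN k (by omega)).le
    exact Filter.limsup_le_of_le hcobdd hev2
  have h1L : (0:ℝ) < 1 + L := by linarith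
  have hcont : Filter.Tendsto (fun c : ℝ => c * (δn + R / (1 + c)))
      (nhdsWithin L (Set.Ioi L)) (nhds (L * (δn + R / (1 + L)))) := by
    have hca : ContinuousAt (fun c : ℝ => c * (δn + R / (1 + c))) L := by
      apply ContinuousAt.mul continuousAt_id
      apply ContinuousAt.add continuousAt_const
      exact ContinuousAt.div continuousAt_const
        (continuousAt_const.add continuousAt_id) h1L.ne'
    exact hca.continuousWithinAt
  have hLh : L ≤ L * (δn + R / (1 + L)) := by
    refine ge_of_tendsto hcont ?_
    filter_upwards [self_mem_nhdsWithin] with c hc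
    exact key c hc
  have h2 : L * (1 + L) ≤ L * δn * (1 + L) + L * R := by
    have h3 := mul_le_mul_of_nonneg_right hLh h1L.le
    calc L * (1 + L) ≤ L * (δn + R / (1 + L)) * (1 + L) := h3
      _ = L * δn * (1 + L) + L * (R / (1 + L) * (1 + L)) := by ring
      _ = L * δn * (1 + L) + L * R := by rw [div_mul_cancel₀ _ h1L.ne']
  rcases eq_or_lt_of_le hL0 with h | h
  · linarith [hnstar, h.symm]
  · rw [le_sub_iff_add_le, le_div_iff₀ hδn']
    nlinarith [h2, h]
end

section
/- The map T is point dissipative on the first quadrant: there exist constants P⁰ > 0 and N⁰ > 0 such that for every (p₀, n₀) with p₀ ≥ 0 and n₀ ≥ 0 there exists M ∈ ℕ with T^m(p₀, n₀) ∈ [0, P⁰] × [0, N⁰] for all m ≥ M. -/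
set_option maxHeartbeats 1000000

private 
lemma eventual_bound (a : ℕ → ℝ) (lam B : ℝ) (hl0 : 0 ≤ lam) (hl1 : lam < 1)
    (hB : 0 < B) (M0 : ℕ)
    (hstep : ∀ m, M0 ≤ m → a (m + 1) ≤ max (lam * a m) B) :
    ∃ M, M0 ≤ M ∧ ∀ m, M ≤ m → a m ≤ B := by
  have key : ∀ k, a (M0 + k) ≤ max (lam ^ k * a M0) B := by
    intro k
    induction k with
    | zero => simpa using le_max_left (a M0) B
    | succ k ih =>
      have h1 := hstep (M0 + k) (Nat.le_add_right _ _)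
      have h2 : lam * a (M0 + k) ≤ max (lam ^ (k + 1) * a M0) B := by
        rcases le_max_iff.mp ih with h | h
        · refine le_max_of_le_left ?_
          calc lam * a (M0 + k) ≤ lam * (lam ^ k * a M0) :=
                mul_le_mul_of_nonneg_left h hl0
            _ = lam ^ (k + 1) * a M0 := by ring
        · refine le_max_of_le_right ?_
          nlinarith
      have h3 : M0 + (k + 1) = (M0 + k) + 1 := by omega
      rw [h3]
      exact le_trans h1 (max_le h2 (le_max_right _ _))
  obtain ⟨k, hk⟩ : ∃ k, lam ^ k * a M0 ≤ B := by
    rcases le_or_gt (a M0) 0 with h | h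
    · exact ⟨0, by nlinarith⟩
    · obtain ⟨k, hk⟩ := exists_pow_lt_of_lt_one (div_pos hB h) hl1
      refine ⟨k, ?_⟩
      have := (lt_div_iff₀ h).mp hk
      linarith
  refine ⟨M0 + k, Nat.le_add_right _ _, fun m hm => ?_⟩
  obtain ⟨j, rfl⟩ := Nat.exists_eq_add_of_le ((Nat.le_add_right M0 k).trans hm)
  have hjk : k ≤ j := by omega
  have hfin : lam ^ j * a M0 ≤ B := by
    rcases le_or_gt (a M0) 0 with h | h
    · have := mul_nonpos_of_nonneg_of_nonpos (pow_nonneg hl0 j) h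
      linarith
    · have hpow : lam ^ j ≤ lam ^ k := pow_le_pow_of_le_one hl0 hl1.le hjk
      have := mul_le_mul_of_nonneg_right hpow h.le
      linarith
  exact le_trans (key j) (max_le hfin le_rfl)

private 
lemma exists_exp_small (A b ε : ℝ) (hA : 0 < A) (hb : 0 < b) (hε : 0 < ε) :
    ∃ q : ℝ, 0 < q ∧ ∀ p, q ≤ p → A * Real.exp (-(b * p)) ≤ ε := by
  refine ⟨max (Real.log (A / ε)) 0 / b + 1, ?_, ?_⟩
  · have := div_nonneg (le_max_right (Real.log (A / ε)) 0) hb.le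
    linarith
  · intro p hp
    have h2 : b * (max (Real.log (A / ε)) 0 / b + 1) = max (Real.log (A / ε)) 0 + b := by
      field_simp
    have h3 := mul_le_mul_of_nonneg_left hp hb.le
    have h1 : Real.log (A / ε) ≤ b * p := by
      have := le_max_left (Real.log (A / ε)) 0
      linarith
    have h4 : Real.exp (-(b * p)) ≤ (A / ε)⁻¹ := by
      have h5 : (A / ε)⁻¹ = Real.exp (-(Real.log (A / ε))) := by
        rw [Real.exp_neg, Real.exp_log (div_pos hA hε)]
      rw [h5]
      exact Real.exp_le_exp.mpr (by linarith)
    calc A * Real.exp (-(b * p)) ≤ A * (A / ε)⁻¹ := mul_le_mul_of_nonneg_left h4 hA.le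
      _ = ε := by field_simp

/-- `T` is point dissipative on the first quadrant: there is a bounded rectangle
`[0,P⁰] × [0,N⁰]` that every orbit starting in the first quadrant eventually
enters and never leaves. -/
theorem point_dissipative
    (δp δn γp γn σ R : ℝ)
    (hδp0 : 0 < δp) (hδp1 : δp < 1) (hδn0 : 0 < δn) (hδn1 : δn < 1)
    (hγp : 0 < γp) (hγn : 0 < γn) (hσ : 0 < σ) (hR0 : 0 < R)
    (hR : 1 - δn < R) :
    ∃ P0 N0 : ℝ, 0 < P0 ∧ 0 < N0 ∧
      ∀ p₀ n₀ : ℝ, 0 ≤ p₀ → 0 ≤ n₀ →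
        ∃ M : ℕ, ∀ m : ℕ, M ≤ m →
          ((T δp δn γp γn σ R)^[m] (p₀, n₀)).1 ∈ Set.Icc (0 : ℝ) P0 ∧
          ((T δp δn γp γn σ R)^[m] (p₀, n₀)).2 ∈ Set.Icc (0 : ℝ) N0 := by
  have hδn' : 0 < 1 - δn := by linarith
  have hδp' : 0 < 1 - δp := by linarith
  have hden : ∀ n : ℝ, (0:ℝ) < 1 + σ * n ^ 2 := fun n => by nlinarith [sq_nonneg n]
  -- P1 : growth constant for p
  obtain ⟨c, hc1, hc⟩ : ∃ c : ℝ, 1 ≤ c ∧ ∀ p n : ℝ, 0 ≤ p → 0 ≤ n →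
      δp * p + γp * p * n / (1 + σ * n ^ 2) ≤ c * p := by
    have hsq : 0 < Real.sqrt σ := Real.sqrt_pos.mpr hσ
    refine ⟨1 + δp + γp / (2 * Real.sqrt σ), by nlinarith [div_nonneg hγp.le (by positivity : (0:ℝ) ≤ 2 * Real.sqrt σ)], ?_⟩
    intro p n hp hn
    have key : n / (1 + σ * n ^ 2) ≤ 1 / (2 * Real.sqrt σ) := by
      rw [div_le_div_iff₀ (hden n) (by positivity)]
      nlinarith [sq_nonneg (1 - Real.sqrt σ * n), Real.sq_sqrt hσ.le]
    have h2 : γp * p * n / (1 + σ * n ^ 2) ≤ γp / (2 * Real.sqrt σ) * p := by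
      calc γp * p * n / (1 + σ * n ^ 2) = γp * p * (n / (1 + σ * n ^ 2)) := by ring
        _ ≤ γp * p * (1 / (2 * Real.sqrt σ)) := mul_le_mul_of_nonneg_left key (by positivity)
        _ = γp / (2 * Real.sqrt σ) * p := by ring
    linarith
  have hc0 : 0 < c := by linarith
  -- P2 : bound for n
  obtain ⟨N0, hN0, hN0step, hN0inv⟩ : ∃ N0 : ℝ, 0 < N0 ∧
      (∀ n : ℝ, 0 ≤ n → δn * n + R ≤ max ((1 + δn) / 2 * n) N0) ∧ δn * N0 + R ≤ N0 := by
    refine ⟨2 * R / (1 - δn) + R, by positivity, ?_, ?_⟩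
    · intro n hn
      rcases le_or_gt n (2 * R / (1 - δn)) with h | h
      · refine le_max_of_le_right ?_
        nlinarith
      · refine le_max_of_le_left ?_
        rw [div_lt_iff₀ hδn'] at h
        nlinarith
    · have h : (1 - δn) * (2 * R / (1 - δn)) = 2 * R := by field_simp
      nlinarith
  -- P3 : exponent rate α
  obtain ⟨α, hα0, hα1, hαK⟩ : ∃ α : ℝ, 0 < α ∧ α ≤ 1 ∧ ∀ p n : ℝ, 0 ≤ p → 0 ≤ n →
      n ≤ N0 → α * p ≤ γn * p / (1 + σ * n ^ 2) := by
    refine ⟨min (γn / (1 + σ * N0 ^ 2)) 1, lt_min (div_pos hγn (hden N0)) one_pos,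
      min_le_right _ _, ?_⟩
    intro p n hp hn hnN
    have h1 : (1 : ℝ) + σ * n ^ 2 ≤ 1 + σ * N0 ^ 2 := by
      have hsq : n ^ 2 ≤ N0 ^ 2 := by nlinarith
      nlinarith [mul_le_mul_of_nonneg_left hsq hσ.le]
    have h2 : γn * p / (1 + σ * N0 ^ 2) ≤ γn * p / (1 + σ * n ^ 2) :=
      div_le_div_of_nonneg_left (by positivity) (hden n) h1
    have h3 : min (γn / (1 + σ * N0 ^ 2)) 1 * p ≤ γn / (1 + σ * N0 ^ 2) * p :=
      mul_le_mul_of_nonneg_right (min_le_left _ _) hp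
    calc min (γn / (1 + σ * N0 ^ 2)) 1 * p ≤ γn / (1 + σ * N0 ^ 2) * p := h3
      _ = γn * p / (1 + σ * N0 ^ 2) := by ring
      _ ≤ γn * p / (1 + σ * n ^ 2) := h2
  -- C
  set C : ℝ := δn + R with hC_def
  have hC1 : 1 < C := by simp only [hC_def]; linarith
  have hC0 : 0 < C := by linarith
  -- θ
  obtain ⟨θ, hθ0, hθc⟩ : ∃ θ : ℝ, 0 < θ ∧ θ * c = α / 2 :=
    ⟨α / (2 * c), by positivity, by field_simp⟩
  -- ps
  obtain ⟨ps, hps0, hps⟩ : ∃ ps : ℝ, 0 < ps ∧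
      ∀ p, ps ≤ p → C * Real.exp (-(α * p) / 2) ≤ 1 / 2 := by
    obtain ⟨q, hq0, hq⟩ := exists_exp_small C (α / 2) (1 / 2) hC0 (by positivity) (by norm_num)
    refine ⟨q, hq0, fun p hp => ?_⟩
    have h := hq p hp
    have he : -(α / 2 * p) = -(α * p) / 2 := by ring
    rwa [he] at h
  -- Ss
  set Ss : ℝ := N0 * Real.exp (θ * (c * ps)) with hSs_def
  have hSs0 : 0 < Ss := mul_pos hN0 (Real.exp_pos _)
  -- pss
  obtain ⟨pss, hpss0, hpss⟩ : ∃ pss : ℝ, 0 < pss ∧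
      ∀ p, pss ≤ p → γp * Ss * Real.exp (-(θ * p)) ≤ (1 - δp) / 2 :=
    exists_exp_small (γp * Ss) θ ((1 - δp) / 2) (by positivity) hθ0 (by positivity)
  -- one-step facts
  have hPnonneg : ∀ p n : ℝ, 0 ≤ p → 0 ≤ n → 0 ≤ δp * p + γp * p * n / (1 + σ * n ^ 2) := by
    intro p n hp hn
    have h1 : 0 ≤ γp * p * n / (1 + σ * n ^ 2) :=
      div_nonneg (mul_nonneg (mul_nonneg hγp.le hp) hn) (hden n).le
    nlinarith
  have hPlin : ∀ p n : ℝ, 0 ≤ p → 0 ≤ n →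
      δp * p + γp * p * n / (1 + σ * n ^ 2) ≤ p * (δp + γp * n) := by
    intro p n hp hn
    have h1 : γp * p * n / (1 + σ * n ^ 2) ≤ γp * p * n :=
      div_le_self (mul_nonneg (mul_nonneg hγp.le hp) hn) (by nlinarith [sq_nonneg n])
    nlinarith
  have hexp1 : ∀ p n : ℝ, 0 ≤ p → 0 ≤ n →
      Real.exp (-(γn * p) / (1 + σ * n ^ 2)) ≤ 1 := by
    intro p n hp hn
    rw [Real.exp_le_one_iff]
    rw [neg_div]
    exact neg_nonpos_of_nonneg (div_nonneg (mul_nonneg hγn.le hp) (hden n).le)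
  have hNnonneg : ∀ p n : ℝ, 0 ≤ p → 0 ≤ n →
      0 ≤ δn * n * Real.exp (-(γn * p) / (1 + σ * n ^ 2))
        + R * n * Real.exp (-p) / (1 + n) := by
    intro p n hp hn
    have h1 : 0 ≤ δn * n * Real.exp (-(γn * p) / (1 + σ * n ^ 2)) :=
      mul_nonneg (mul_nonneg hδn0.le hn) (Real.exp_pos _).le
    have h2 : 0 ≤ R * n * Real.exp (-p) / (1 + n) :=
      div_nonneg (mul_nonneg (mul_nonneg hR0.le hn) (Real.exp_pos _).le) (by linarith)
    linarith
  have hNlin : ∀ p n : ℝ, 0 ≤ p → 0 ≤ n →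
      δn * n * Real.exp (-(γn * p) / (1 + σ * n ^ 2))
        + R * n * Real.exp (-p) / (1 + n) ≤ δn * n + R := by
    intro p n hp hn
    have h1 : δn * n * Real.exp (-(γn * p) / (1 + σ * n ^ 2)) ≤ δn * n * 1 :=
      mul_le_mul_of_nonneg_left (hexp1 p n hp hn) (mul_nonneg hδn0.le hn)
    have he : Real.exp (-p) ≤ 1 := Real.exp_le_one_iff.mpr (by linarith)
    have h2 : R * n * Real.exp (-p) / (1 + n) ≤ R := by
      rw [div_le_iff₀ (by linarith : (0:ℝ) < 1 + n)]
      nlinarith [mul_nonneg hR0.le hn, (Real.exp_pos (-p)).le]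
    nlinarith
  have hNexp : ∀ p n : ℝ, 0 ≤ p → 0 ≤ n → n ≤ N0 →
      δn * n * Real.exp (-(γn * p) / (1 + σ * n ^ 2))
        + R * n * Real.exp (-p) / (1 + n) ≤ C * n * Real.exp (-(α * p)) := by
    intro p n hp hn hnN
    have hα' : α * p ≤ γn * p / (1 + σ * n ^ 2) := hαK p n hp hn hnN
    have h1 : Real.exp (-(γn * p) / (1 + σ * n ^ 2)) ≤ Real.exp (-(α * p)) := by
      apply Real.exp_le_exp.mpr
      rw [neg_div]
      linarith
    have h2 : δn * n * Real.exp (-(γn * p) / (1 + σ * n ^ 2))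
        ≤ δn * n * Real.exp (-(α * p)) :=
      mul_le_mul_of_nonneg_left h1 (mul_nonneg hδn0.le hn)
    have h3 : Real.exp (-p) ≤ Real.exp (-(α * p)) := by
      apply Real.exp_le_exp.mpr
      nlinarith
    have h4 : R * n * Real.exp (-p) / (1 + n) ≤ R * n * Real.exp (-(α * p)) := by
      calc R * n * Real.exp (-p) / (1 + n) ≤ R * n * Real.exp (-p) :=
            div_le_self (mul_nonneg (mul_nonneg hR0.le hn) (Real.exp_pos _).le)
              (by linarith)
        _ ≤ R * n * Real.exp (-(α * p)) :=
            mul_le_mul_of_nonneg_left h3 (mul_nonneg hR0.le hn)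
    have h5 : C * n * Real.exp (-(α * p)) =
        δn * n * Real.exp (-(α * p)) + R * n * Real.exp (-(α * p)) := by
      simp only [hC_def]; ring
    linarith
  have hT1 : ∀ y : ℝ × ℝ, (T δp δn γp γn σ R y).1 =
      δp * y.1 + γp * y.1 * y.2 / (1 + σ * y.2 ^ 2) := fun y => rfl
  have hT2 : ∀ y : ℝ × ℝ, (T δp δn γp γn σ R y).2 =
      δn * y.2 * Real.exp (-(γn * y.1) / (1 + σ * y.2 ^ 2))
        + R * y.2 * Real.exp (-y.1) / (1 + y.2) := fun y => rfl
  refine ⟨c * pss, N0, mul_pos hc0 hpss0, hN0, ?_⟩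
  intro p₀ n₀ hp₀ hn₀
  set x : ℕ → ℝ × ℝ := fun m => (T δp δn γp γn σ R)^[m] (p₀, n₀) with hx_def
  have hx : ∀ m, x (m + 1) = T δp δn γp γn σ R (x m) := fun m =>
    Function.iterate_succ_apply' _ _ _
  have hpos : ∀ m, 0 ≤ (x m).1 ∧ 0 ≤ (x m).2 := by
    intro m
    induction m with
    | zero => exact ⟨hp₀, hn₀⟩
    | succ m ih =>
      rw [hx m]
      exact ⟨by rw [hT1]; exact hPnonneg _ _ ih.1 ih.2,
             by rw [hT2]; exact hNnonneg _ _ ih.1 ih.2⟩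
  -- Stage 1 : n is eventually ≤ N0
  obtain ⟨M1, -, hM1⟩ := eventual_bound (fun m => (x m).2) ((1 + δn) / 2) N0
    (by linarith) (by linarith) hN0 0 (fun m _ => by
      have h := le_trans (by rw [hx m, hT2]; exact hNlin _ _ (hpos m).1 (hpos m).2 :
        (x (m+1)).2 ≤ δn * (x m).2 + R) (hN0step _ (hpos m).2)
      exact h)
  -- Stage 2 : S = n·exp(θp) is eventually ≤ Ss
  have hSstep : ∀ m, M1 ≤ m →
      (x (m + 1)).2 * Real.exp (θ * (x (m + 1)).1) ≤
        max (1 / 2 * ((x m).2 * Real.exp (θ * (x m).1))) Ss := by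
    intro m hm
    obtain ⟨hp, hn⟩ := hpos m
    have hnN : (x m).2 ≤ N0 := hM1 m hm
    have hp' : (x (m + 1)).1 ≤ c * (x m).1 := by rw [hx m, hT1]; exact hc _ _ hp hn
    rcases le_or_gt ps (x m).1 with hcase | hcase
    · refine le_max_of_le_left ?_
      have h1 : (x (m + 1)).2 ≤ C * (x m).2 * Real.exp (-(α * (x m).1)) := by
        rw [hx m, hT2]; exact hNexp _ _ hp hn hnN
      have h2 : Real.exp (θ * (x (m + 1)).1) ≤ Real.exp (θ * (c * (x m).1)) :=
        Real.exp_le_exp.mpr (mul_le_mul_of_nonneg_left hp' hθ0.le)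
      have h3 : (x (m + 1)).2 * Real.exp (θ * (x (m + 1)).1) ≤
          C * (x m).2 * Real.exp (-(α * (x m).1)) * Real.exp (θ * (c * (x m).1)) :=
        mul_le_mul h1 h2 (Real.exp_pos _).le
          (mul_nonneg (mul_nonneg hC0.le hn) (Real.exp_pos _).le)
      have hexp_eq : -(α * (x m).1) + θ * (c * (x m).1) = -(α * (x m).1) / 2 := by
        have h : θ * (c * (x m).1) = θ * c * (x m).1 := by ring
        rw [h, hθc]; ring
      have h4 : C * (x m).2 * Real.exp (-(α * (x m).1)) * Real.exp (θ * (c * (x m).1))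
          = (x m).2 * (C * Real.exp (-(α * (x m).1) / 2)) := by
        rw [mul_assoc, ← Real.exp_add, hexp_eq]; ring
      have h5 : C * Real.exp (-(α * (x m).1) / 2) ≤ 1 / 2 := hps _ hcase
      have h6 : (x m).2 * (C * Real.exp (-(α * (x m).1) / 2)) ≤ (x m).2 * (1 / 2) :=
        mul_le_mul_of_nonneg_left h5 hn
      have h7 : (x m).2 ≤ (x m).2 * Real.exp (θ * (x m).1) :=
        le_mul_of_one_le_right hn (Real.one_le_exp (mul_nonneg hθ0.le hp))
      nlinarith [h3, h4, h6, h7]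
    · refine le_max_of_le_right ?_
      have hn' : (x (m + 1)).2 ≤ N0 := by
        have h1 : (x (m + 1)).2 ≤ δn * (x m).2 + R := by
          rw [hx m, hT2]; exact hNlin _ _ hp hn
        have h2 : δn * (x m).2 ≤ δn * N0 := mul_le_mul_of_nonneg_left hnN hδn0.le
        linarith
      have hpc : (x (m + 1)).1 ≤ c * ps :=
        le_trans hp' (mul_le_mul_of_nonneg_left hcase.le hc0.le)
      have h2 : Real.exp (θ * (x (m + 1)).1) ≤ Real.exp (θ * (c * ps)) :=
        Real.exp_le_exp.mpr (mul_le_mul_of_nonneg_left hpc hθ0.le)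
      calc (x (m + 1)).2 * Real.exp (θ * (x (m + 1)).1)
          ≤ N0 * Real.exp (θ * (c * ps)) :=
            mul_le_mul hn' h2 (Real.exp_pos _).le hN0.le
        _ = Ss := hSs_def.symm
  obtain ⟨M2, hM12, hM2⟩ := eventual_bound
    (fun m => (x m).2 * Real.exp (θ * (x m).1)) (1 / 2) Ss
    (by norm_num) (by norm_num) hSs0 M1 hSstep
  -- Stage 3 : p is eventually ≤ c * pss
  have hPstep : ∀ m, M2 ≤ m →
      (x (m + 1)).1 ≤ max ((1 + δp) / 2 * (x m).1) (c * pss) := by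
    intro m hm
    obtain ⟨hp, hn⟩ := hpos m
    rcases le_or_gt pss (x m).1 with hcase | hcase
    · refine le_max_of_le_left ?_
      have hS : (x m).2 * Real.exp (θ * (x m).1) ≤ Ss := hM2 m hm
      have hnb : (x m).2 ≤ Ss * Real.exp (-(θ * (x m).1)) := by
        have h1 := mul_le_mul_of_nonneg_right hS (Real.exp_pos (-(θ * (x m).1))).le
        have h2 : (x m).2 * Real.exp (θ * (x m).1) * Real.exp (-(θ * (x m).1))
            = (x m).2 := by
          rw [mul_assoc, ← Real.exp_add]; simp
        rwa [h2] at h1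
      have hγ : γp * (x m).2 ≤ (1 - δp) / 2 := by
        have h3 := hpss (x m).1 hcase
        nlinarith [mul_le_mul_of_nonneg_left hnb hγp.le]
      have h4 : (x (m + 1)).1 ≤ (x m).1 * (δp + γp * (x m).2) := by
        rw [hx m, hT1]; exact hPlin _ _ hp hn
      have h5 : (x m).1 * (δp + γp * (x m).2) ≤ (x m).1 * ((1 + δp) / 2) :=
        mul_le_mul_of_nonneg_left (by linarith) hp
      calc (x (m + 1)).1 ≤ (x m).1 * (δp + γp * (x m).2) := h4
        _ ≤ (x m).1 * ((1 + δp) / 2) := h5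
        _ = (1 + δp) / 2 * (x m).1 := by ring
    · refine le_max_of_le_right ?_
      have hp' : (x (m + 1)).1 ≤ c * (x m).1 := by rw [hx m, hT1]; exact hc _ _ hp hn
      exact le_trans hp' (mul_le_mul_of_nonneg_left hcase.le hc0.le)
  obtain ⟨M3, hM23, hM3⟩ := eventual_bound (fun m => (x m).1) ((1 + δp) / 2) (c * pss)
    (by linarith) (by linarith) (mul_pos hc0 hpss0) M2 hPstep
  refine ⟨M3, fun m hm => ?_⟩
  exact ⟨Set.mem_Icc.mpr ⟨(hpos m).1, hM3 m hm⟩,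
         Set.mem_Icc.mpr ⟨(hpos m).2, hM1 m (le_trans (le_trans hM12 hM23) hm)⟩⟩
end

section
/- (Global attractor.) There exists a set A contained in the closed first quadrant M = {(p,n) ∈ ℝ² : p ≥ 0, n ≥ 0} that is compact, connected, invariant in the sense T(A) = A, and globally attracting: for every (p₀, n₀) ∈ M, the Euclidean distance from T^m(p₀, n₀) to A tends to 0 as m → ∞. -/
open Set Metric

private lemma exists_iter_subset {X : Type*} [MetricSpace X] {f : X → X} {B : Set X}
    (hKcomp : ∀ m : ℕ, IsCompact (f^[m] '' B))
    (hmono : ∀ m : ℕ, f^[m+1] '' B ⊆ f^[m] '' B)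
    {U : Set X} (hU : IsOpen U) (hAU : (⋂ m, f^[m] '' B) ⊆ U) :
    ∃ m, f^[m] '' B ⊆ U := by
  by_contra h
  push_neg at h
  have hne : ∀ m, ((f^[m] '' B) \ U).Nonempty := by
    intro m
    rcases not_subset.1 (h m) with ⟨x, hx, hxU⟩
    exact ⟨x, hx, hxU⟩
  have key := IsCompact.nonempty_iInter_of_sequence_nonempty_isCompact_isClosed
    (fun m => (f^[m] '' B) \ U)
    (fun m => diff_subset_diff_left (hmono m)) hne
    ((hKcomp 0).diff hU)
    (fun m => ((hKcomp m).diff hU).isClosed)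
  rcases key with ⟨x, hx⟩
  simp only [mem_iInter, mem_diff] at hx
  exact (hx 0).2 (hAU (mem_iInter.2 fun m => (hx m).1))

private lemma abstract_attractor {X : Type*} [MetricSpace X]
    (f : X → X) (B : Set X)
    (hBco : IsCompact B) (hBconn : IsConnected B)
    (hf : ContinuousOn f B) (hfB : f '' B ⊆ B) :
    ∃ A : Set X, A ⊆ B ∧ IsCompact A ∧ IsConnected A ∧ f '' A = A ∧
      ∀ ε > 0, ∃ m₀ : ℕ, ∀ m ≥ m₀, f^[m] '' B ⊆ Metric.thickening ε A := by
  set K : ℕ → Set X := fun m => f^[m] '' B with hK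
  have hK0 : K 0 = B := by simp [hK]
  have hKsucc : ∀ m, K (m+1) = f '' K m := by
    intro m
    simp only [hK, Function.iterate_succ', Set.image_comp]
  have hKB : ∀ m, K m ⊆ B := by
    intro m
    induction m with
    | zero => exact hK0.le
    | succ m ih => rw [hKsucc]; exact (Set.image_mono ih).trans hfB
  have hmono : ∀ m, K (m+1) ⊆ K m := by
    intro m
    induction m with
    | zero => rw [hKsucc, hK0]; exact hfB
    | succ m ih =>
        rw [hKsucc (m+1)]
        exact (Set.image_mono ih).trans (hKsucc m).ge
  have hanti : Antitone K := antitone_nat_of_succ_le hmono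
  have hKcomp : ∀ m, IsCompact (K m) := by
    intro m
    induction m with
    | zero => exact hK0 ▸ hBco
    | succ m ih => rw [hKsucc]; exact ih.image_of_continuousOn (hf.mono (hKB m))
  have hKconn : ∀ m, IsConnected (K m) := by
    intro m
    induction m with
    | zero => exact hK0 ▸ hBconn
    | succ m ih => rw [hKsucc]; exact ih.image f (hf.mono (hKB m))
  set A : Set X := ⋂ m, K m with hA
  have hAK : ∀ m, A ⊆ K m := fun m => iInter_subset K m
  have hAB : A ⊆ B := (hAK 0).trans hK0.le
  have hAcl : IsClosed A := isClosed_iInter fun m => (hKcomp m).isClosed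
  have hAco : IsCompact A := hBco.of_isClosed_subset hAcl hAB
  have hAne : A.Nonempty :=
    IsCompact.nonempty_iInter_of_sequence_nonempty_isCompact_isClosed K hmono
      (fun m => (hKconn m).nonempty) (hKcomp 0) (fun m => (hKcomp m).isClosed)
  have hexU : ∀ U : Set X, IsOpen U → A ⊆ U → ∃ m, K m ⊆ U :=
    fun U hU hAU => exists_iter_subset hKcomp hmono hU hAU
  -- invariance
  have hinv : f '' A = A := by
    apply Set.Subset.antisymm
    · intro y hy
      rcases hy with ⟨a, ha, rfl⟩
      refine mem_iInter.2 fun m => hmono m ?_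
      rw [hKsucc]
      exact Set.mem_image_of_mem f (hAK m ha)
    · intro a ha
      set S : Set X := B ∩ f ⁻¹' {a} with hS
      have hScl : IsClosed S := hf.preimage_isClosed_of_isClosed hBco.isClosed isClosed_singleton
      have hCcomp : ∀ m, IsCompact (K m ∩ S) := fun m => (hKcomp m).inter_right hScl
      have hCmono : ∀ m, K (m+1) ∩ S ⊆ K m ∩ S :=
        fun m => inter_subset_inter_left S (hmono m)
      have hCne : ∀ m, (K m ∩ S).Nonempty := by
        intro m
        have : a ∈ K (m+1) := hAK (m+1) ha
        rw [hKsucc] at this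
        rcases this with ⟨y, hy, hfy⟩
        exact ⟨y, hy, hKB m hy, by simp [hfy]⟩
      have := IsCompact.nonempty_iInter_of_sequence_nonempty_isCompact_isClosed
        (fun m => K m ∩ S) hCmono hCne (hCcomp 0) (fun m => (hCcomp m).isClosed)
      rcases this with ⟨y, hy⟩
      simp only [mem_iInter, mem_inter_iff] at hy
      refine ⟨y, mem_iInter.2 fun m => (hy m).1, ?_⟩
      have := (hy 0).2.2
      simpa using this
  -- connectedness
  have hAconn : IsConnected A := by
    refine ⟨hAne, ?_⟩
    intro U V hU hV hcover hAU hAV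
    by_contra hcon
    rw [Set.not_nonempty_iff_eq_empty] at hcon
    set A1 : Set X := A \ V with hA1
    set A2 : Set X := A \ U with hA2
    have hA1ne : A1.Nonempty := by
      rcases hAU with ⟨x, hxA, hxU⟩
      refine ⟨x, hxA, fun hxV => ?_⟩
      exact absurd (Set.mem_inter hxA (Set.mem_inter hxU hxV)) (by simp [hcon])
    have hA2ne : A2.Nonempty := by
      rcases hAV with ⟨x, hxA, hxV⟩
      refine ⟨x, hxA, fun hxU => ?_⟩
      exact absurd (Set.mem_inter hxA (Set.mem_inter hxU hxV)) (by simp [hcon])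
    have hdisj : Disjoint A1 A2 := by
      rw [Set.disjoint_left]
      rintro x ⟨hxA, hxV⟩ ⟨-, hxU⟩
      rcases hcover hxA with h | h
      · exact hxU h
      · exact hxV h
    have hsep := SeparatedNhds.of_isCompact_isCompact (hAco.diff hV) (hAco.diff hU) hdisj
    rcases hsep with ⟨U', V', hU', hV', hsub1, hsub2, hdUV⟩
    have hAcov : A ⊆ U' ∪ V' := by
      intro x hxA
      by_cases hxV : x ∈ V
      · by_cases hxU : x ∈ U
        · exact absurd (Set.mem_inter hxA (Set.mem_inter hxU hxV)) (by simp [hcon])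
        · exact Or.inr (hsub2 ⟨hxA, hxU⟩)
      · exact Or.inl (hsub1 ⟨hxA, hxV⟩)
    rcases hexU (U' ∪ V') (hU'.union hV') hAcov with ⟨m, hm⟩
    have hKU' : (K m ∩ U').Nonempty := by
      rcases hA1ne with ⟨x, hx⟩
      exact ⟨x, hAK m hx.1, hsub1 hx⟩
    have hKV' : (K m ∩ V').Nonempty := by
      rcases hA2ne with ⟨x, hx⟩
      exact ⟨x, hAK m hx.1, hsub2 hx⟩
    have := (hKconn m).2 U' V' hU' hV' hm hKU' hKV'
    rcases this with ⟨x, -, hxU', hxV'⟩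
    exact (Set.disjoint_left.1 hdUV) hxU' hxV'
  refine ⟨A, hAB, hAco, hAconn, hinv, ?_⟩
  intro ε hε
  rcases hexU (Metric.thickening ε A) Metric.isOpen_thickening
    (Metric.self_subset_thickening hε A) with ⟨m₀, hm₀⟩
  exact ⟨m₀, fun m hm => (hanti hm).trans hm₀⟩

open Set Metric

section Concrete

variable {δp δn γp γn σ R : ℝ}

lemma T_mem_Q (hδp0 : 0 < δp) (hδn0 : 0 < δn) (hγp : 0 < γp) (hσ : 0 < σ) (hR0 : 0 < R)
    {x : ℝ × ℝ} (hx1 : 0 ≤ x.1) (hx2 : 0 ≤ x.2) :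
    0 ≤ (T δp δn γp γn σ R x).1 ∧ 0 ≤ (T δp δn γp γn σ R x).2 := by
  have hd : (0:ℝ) < 1 + σ * x.2 ^ 2 := by positivity
  constructor
  · exact add_nonneg (mul_nonneg hδp0.le hx1)
      (div_nonneg (mul_nonneg (mul_nonneg hγp.le hx1) hx2) hd.le)
  · exact add_nonneg (mul_nonneg (mul_nonneg hδn0.le hx2) (Real.exp_pos _).le)
      (div_nonneg (mul_nonneg (mul_nonneg hR0.le hx2) (Real.exp_pos _).le) (by linarith))

lemma T_snd_le (hδn0 : 0 < δn) (hγn : 0 < γn) (hσ : 0 < σ) (hR0 : 0 < R)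
    {x : ℝ × ℝ} (hx1 : 0 ≤ x.1) (hx2 : 0 ≤ x.2) :
    (T δp δn γp γn σ R x).2 ≤ δn * x.2 + R * Real.exp (-x.1) := by
  have hd : (0:ℝ) < 1 + σ * x.2 ^ 2 := by positivity
  have h1 : δn * x.2 * Real.exp (-(γn * x.1) / (1 + σ * x.2 ^ 2)) ≤ δn * x.2 := by
    have : Real.exp (-(γn * x.1) / (1 + σ * x.2 ^ 2)) ≤ 1 := by
      rw [Real.exp_le_one_iff]
      exact div_nonpos_of_nonpos_of_nonneg (by nlinarith) hd.le
    nlinarith [mul_nonneg hδn0.le hx2]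
  have h2 : R * x.2 * Real.exp (-x.1) / (1 + x.2) ≤ R * Real.exp (-x.1) := by
    rw [div_le_iff₀ (by linarith : (0:ℝ) < 1 + x.2)]
    nlinarith [Real.exp_pos (-x.1), mul_pos hR0 (Real.exp_pos (-x.1))]
  calc (T δp δn γp γn σ R x).2 ≤ δn * x.2 + R * x.2 * Real.exp (-x.1) / (1 + x.2) := by
        exact add_le_add_left h1 _
    _ ≤ δn * x.2 + R * Real.exp (-x.1) := add_le_add_right h2 _

lemma T_fst_le_gen (hδp0 : 0 < δp) (hγp : 0 < γp) (hσ : 0 < σ)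
    {s : ℝ} (hs0 : 0 < s) (hs2 : s ^ 2 = σ)
    {x : ℝ × ℝ} (hx1 : 0 ≤ x.1) (hx2 : 0 ≤ x.2) :
    1 + (T δp δn γp γn σ R x).1 ≤ max (δp + γp / (2 * s)) 1 * (1 + x.1) := by
  have hd : (0:ℝ) < 1 + σ * x.2 ^ 2 := by positivity
  have hfrac : x.2 / (1 + σ * x.2 ^ 2) ≤ 1 / (2 * s) := by
    rw [div_le_div_iff₀ hd (by positivity)]
    nlinarith [sq_nonneg (1 - s * x.2)]
  have hp' : (T δp δn γp γn σ R x).1 ≤ (δp + γp / (2 * s)) * x.1 := by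
    show δp * x.1 + γp * x.1 * x.2 / (1 + σ * x.2 ^ 2) ≤ _
    have : γp * x.1 * x.2 / (1 + σ * x.2 ^ 2) = (γp * x.1) * (x.2 / (1 + σ * x.2 ^ 2)) := by
      ring
    rw [this]
    have h2 : (γp * x.1) * (x.2 / (1 + σ * x.2 ^ 2)) ≤ (γp * x.1) * (1 / (2 * s)) :=
      mul_le_mul_of_nonneg_left hfrac (mul_nonneg hγp.le hx1)
    have h3 : (γp * x.1) * (1 / (2 * s)) = γp / (2 * s) * x.1 := by ring
    linarith [h2, h3.le]
  have hK1 : (1:ℝ) ≤ max (δp + γp / (2 * s)) 1 := le_max_right _ _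
  have hK2 : δp + γp / (2 * s) ≤ max (δp + γp / (2 * s)) 1 := le_max_left _ _
  have hKp : (δp + γp / (2 * s)) * x.1 ≤ max (δp + γp / (2 * s)) 1 * x.1 :=
    mul_le_mul_of_nonneg_right hK2 hx1
  nlinarith

lemma T_fst_le_small (hδp0 : 0 < δp) (hδp1 : δp < 1) (hγp : 0 < γp) (hσ : 0 < σ)
    {x : ℝ × ℝ} (hx1 : 1 ≤ x.1) (hx2 : 0 ≤ x.2) (hx2' : x.2 ≤ (1 - δp) / (2 * γp)) :
    1 + (T δp δn γp γn σ R x).1 ≤ (3 + δp) / 4 * (1 + x.1) := by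
  have hd : (0:ℝ) < 1 + σ * x.2 ^ 2 := by positivity
  have hx10 : (0:ℝ) ≤ x.1 := by linarith
  have hfrac : x.2 / (1 + σ * x.2 ^ 2) ≤ x.2 := by
    apply div_le_self hx2
    nlinarith [sq_nonneg x.2]
  have hp' : (T δp δn γp γn σ R x).1 ≤ ((1 + δp) / 2) * x.1 := by
    show δp * x.1 + γp * x.1 * x.2 / (1 + σ * x.2 ^ 2) ≤ _
    have heq : γp * x.1 * x.2 / (1 + σ * x.2 ^ 2) = (γp * x.1) * (x.2 / (1 + σ * x.2 ^ 2)) := by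
      ring
    rw [heq]
    have h2 : (γp * x.1) * (x.2 / (1 + σ * x.2 ^ 2)) ≤ (γp * x.1) * x.2 :=
      mul_le_mul_of_nonneg_left hfrac (mul_nonneg hγp.le hx10)
    have h3 : (γp * x.1) * x.2 ≤ (γp * x.1) * ((1 - δp) / (2 * γp)) :=
      mul_le_mul_of_nonneg_left hx2' (mul_nonneg hγp.le hx10)
    have h4 : (γp * x.1) * ((1 - δp) / (2 * γp)) = ((1 - δp) / 2) * x.1 := by
      field_simp
    nlinarith
  nlinarith

end Concrete

section GStep

variable {δp δn γp γn σ R M : ℝ}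

lemma G_step_gen (hδp0 : 0 < δp) (hδn0 : 0 < δn) (hδn1 : δn < 1)
    (hγp : 0 < γp) (hγn : 0 < γn) (hσ : 0 < σ) (hR0 : 0 < R)
    {s : ℝ} (hs0 : 0 < s) (hs2 : s ^ 2 = σ) (hM : 0 < M)
    {x : ℝ × ℝ} (hx1 : 0 ≤ x.1) (hx2 : 0 ≤ x.2) :
    (1 + (T δp δn γp γn σ R x).1) * Real.exp (M * (T δp δn γp γn σ R x).2) ≤
      (max (δp + γp / (2 * s)) 1 * Real.exp (M * R)) *
        ((1 + x.1) * Real.exp (M * x.2)) := by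
  have hA := T_fst_le_gen (δn := δn) (γn := γn) (R := R) hδp0 hγp hσ hs0 hs2 hx1 hx2
  have hn' : (T δp δn γp γn σ R x).2 ≤ x.2 + R := by
    have h1 := T_snd_le (δp := δp) (γp := γp) hδn0 hγn hσ hR0 hx1 hx2
    have h2 : Real.exp (-x.1) ≤ 1 := Real.exp_le_one_iff.2 (by linarith)
    nlinarith [mul_nonneg hδn0.le hx2]
  have hB : Real.exp (M * (T δp δn γp γn σ R x).2) ≤
      Real.exp (M * x.2) * Real.exp (M * R) := by
    rw [← Real.exp_add]
    apply Real.exp_le_exp.2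
    nlinarith [mul_le_mul_of_nonneg_left hn' hM.le]
  have h1p : (0:ℝ) ≤ 1 + (T δp δn γp γn σ R x).1 := by
    have := (T_mem_Q (γn := γn) hδp0 hδn0 hγp hσ hR0 hx1 hx2).1
    linarith
  calc (1 + (T δp δn γp γn σ R x).1) * Real.exp (M * (T δp δn γp γn σ R x).2)
      ≤ (max (δp + γp / (2 * s)) 1 * (1 + x.1)) * (Real.exp (M * x.2) * Real.exp (M * R)) := by
        apply mul_le_mul hA hB (Real.exp_pos _).le
        positivity
    _ = (max (δp + γp / (2 * s)) 1 * Real.exp (M * R)) * ((1 + x.1) * Real.exp (M * x.2)) := by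
        ring

lemma G_step_contract (hδp0 : 0 < δp) (hδp1 : δp < 1) (hδn0 : 0 < δn) (hδn1 : δn < 1)
    (hγp : 0 < γp) (hγn : 0 < γn) (hσ : 0 < σ) (hR0 : 0 < R)
    {s : ℝ} (hs0 : 0 < s) (hs2 : s ^ 2 = σ) (hM : 0 < M)
    (hkey1 : max (δp + γp / (2 * s)) 1 *
      Real.exp (-(M * ((1 - δn) * ((1 - δp) / (2 * γp))))) = (3 + δp) / 4)
    {x : ℝ × ℝ} (hx1 : 1 ≤ x.1) (hx2 : 0 ≤ x.2)
    (hsmall : M * R * Real.exp (-x.1) ≤ Real.log ((7 + δp) / 8 / ((3 + δp) / 4))) :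
    (1 + (T δp δn γp γn σ R x).1) * Real.exp (M * (T δp δn γp γn σ R x).2) ≤
      (7 + δp) / 8 * ((1 + x.1) * Real.exp (M * x.2)) := by
  have hx10 : (0:ℝ) ≤ x.1 := by linarith
  have hθ'0 : (0:ℝ) < (3 + δp) / 4 := by linarith
  have hρ0 : (0:ℝ) < (7 + δp) / 8 := by linarith
  have hexpβ : Real.exp (Real.log ((7 + δp) / 8 / ((3 + δp) / 4))) =
      (7 + δp) / 8 / ((3 + δp) / 4) := Real.exp_log (by positivity)
  have hkey2 : (3 + δp) / 4 * Real.exp (Real.log ((7 + δp) / 8 / ((3 + δp) / 4))) =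
      (7 + δp) / 8 := by
    rw [hexpβ]; field_simp
  have hn'base := T_snd_le (δp := δp) (γp := γp) hδn0 hγn hσ hR0 hx10 hx2
  have h1p : (0:ℝ) ≤ 1 + (T δp δn γp γn σ R x).1 := by
    have := (T_mem_Q (γn := γn) hδp0 hδn0 hγp hσ hR0 hx10 hx2).1
    linarith
  set β := Real.log ((7 + δp) / 8 / ((3 + δp) / 4)) with hβ
  by_cases hcase : x.2 ≤ (1 - δp) / (2 * γp)
  · -- small n
    have hA := T_fst_le_small (δn := δn) (γn := γn) (R := R) hδp0 hδp1 hγp hσ hx1 hx2 hcase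
    have hn' : M * (T δp δn γp γn σ R x).2 ≤ M * x.2 + β := by
      have h1 : M * (T δp δn γp γn σ R x).2 ≤ M * (δn * x.2 + R * Real.exp (-x.1)) :=
        mul_le_mul_of_nonneg_left hn'base hM.le
      have h2' : δn * x.2 ≤ x.2 := by nlinarith
      have h2 : M * (δn * x.2) ≤ M * x.2 := mul_le_mul_of_nonneg_left h2' hM.le
      nlinarith
    have hB : Real.exp (M * (T δp δn γp γn σ R x).2) ≤
        Real.exp (M * x.2) * Real.exp β := by
      rw [← Real.exp_add]; exact Real.exp_le_exp.2 hn'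
    calc (1 + (T δp δn γp γn σ R x).1) * Real.exp (M * (T δp δn γp γn σ R x).2)
        ≤ ((3 + δp) / 4 * (1 + x.1)) * (Real.exp (M * x.2) * Real.exp β) := by
          apply mul_le_mul hA hB (Real.exp_pos _).le
          positivity
      _ = ((3 + δp) / 4 * Real.exp β) * ((1 + x.1) * Real.exp (M * x.2)) := by ring
      _ = (7 + δp) / 8 * ((1 + x.1) * Real.exp (M * x.2)) := by rw [hkey2]
  · -- large n
    push_neg at hcase
    have hA := T_fst_le_gen (δn := δn) (γn := γn) (R := R) hδp0 hγp hσ hs0 hs2 hx10 hx2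
    have hn' : M * (T δp δn γp γn σ R x).2 ≤
        M * x.2 + (-(M * ((1 - δn) * ((1 - δp) / (2 * γp)))) + β) := by
      have h1 : M * (T δp δn γp γn σ R x).2 ≤ M * (δn * x.2 + R * Real.exp (-x.1)) :=
        mul_le_mul_of_nonneg_left hn'base hM.le
      have h2 : δn * x.2 ≤ x.2 - (1 - δn) * ((1 - δp) / (2 * γp)) := by nlinarith
      nlinarith [mul_le_mul_of_nonneg_left h2 hM.le]
    have hB : Real.exp (M * (T δp δn γp γn σ R x).2) ≤
        Real.exp (M * x.2) *
          (Real.exp (-(M * ((1 - δn) * ((1 - δp) / (2 * γp))))) * Real.exp β) := by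
      rw [← Real.exp_add, ← Real.exp_add]
      exact Real.exp_le_exp.2 (by linarith)
    calc (1 + (T δp δn γp γn σ R x).1) * Real.exp (M * (T δp δn γp γn σ R x).2)
        ≤ (max (δp + γp / (2 * s)) 1 * (1 + x.1)) *
            (Real.exp (M * x.2) *
              (Real.exp (-(M * ((1 - δn) * ((1 - δp) / (2 * γp))))) * Real.exp β)) := by
          apply mul_le_mul hA hB (Real.exp_pos _).le
          positivity
      _ = (max (δp + γp / (2 * s)) 1 *
            Real.exp (-(M * ((1 - δn) * ((1 - δp) / (2 * γp))))) * Real.exp β) *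
            ((1 + x.1) * Real.exp (M * x.2)) := by ring
      _ = ((3 + δp) / 4 * Real.exp β) * ((1 + x.1) * Real.exp (M * x.2)) := by rw [hkey1]
      _ = (7 + δp) / 8 * ((1 + x.1) * Real.exp (M * x.2)) := by rw [hkey2]

end GStep

set_option maxHeartbeats 3200000 in
/-- Global attractor: there is a compact, connected, invariant (`T(A) = A`) set
`A` inside the closed first quadrant such that the Euclidean distance from the
iterates `T^[m](p₀,n₀)` to `A` tends to `0` for every starting point in the
first quadrant. -/
theorem global_attractor
    (δp δn γp γn σ R : ℝ)
    (hδp0 : 0 < δp) (hδp1 : δp < 1) (hδn0 : 0 < δn) (hδn1 : δn < 1)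
    (hγp : 0 < γp) (hγn : 0 < γn) (hσ : 0 < σ) (hR0 : 0 < R)
    (hR : 1 - δn < R) :
    ∃ A : Set (ℝ × ℝ),
      A ⊆ {x : ℝ × ℝ | 0 ≤ x.1 ∧ 0 ≤ x.2} ∧
      IsCompact A ∧ IsConnected A ∧
      T δp δn γp γn σ R '' A = A ∧
      ∀ x : ℝ × ℝ, 0 ≤ x.1 → 0 ≤ x.2 →
        Filter.Tendsto
          (fun m : ℕ => ⨅ a : A,
            Real.sqrt ((((T δp δn γp γn σ R)^[m] x).1 - (a : ℝ × ℝ).1) ^ 2 +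
              (((T δp δn γp γn σ R)^[m] x).2 - (a : ℝ × ℝ).2) ^ 2))
          Filter.atTop (nhds 0) := by
  obtain ⟨s, hs0, hs2⟩ : ∃ s : ℝ, 0 < s ∧ s ^ 2 = σ :=
    ⟨Real.sqrt σ, Real.sqrt_pos.2 hσ, Real.sq_sqrt hσ.le⟩
  set f := T δp δn γp γn σ R with hf
  have h1δn : (0:ℝ) < 1 - δn := by linarith
  have h1δp : (0:ℝ) < 1 - δp := by linarith
  have hK'1 : (1:ℝ) ≤ max (δp + γp / (2 * s)) 1 := le_max_right _ _
  have hK'0 : (0:ℝ) < max (δp + γp / (2 * s)) 1 := lt_of_lt_of_le one_pos hK'1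
  have hθ'0 : (0:ℝ) < (3 + δp) / 4 := by linarith
  have hθ'1 : (3 + δp) / 4 < 1 := by linarith
  have hρ0 : (0:ℝ) < (7 + δp) / 8 := by linarith
  have hρ1 : (7 + δp) / 8 < 1 := by linarith
  have hnst0 : (0:ℝ) < (1 - δp) / (2 * γp) := div_pos h1δp (by linarith)
  have hd0 : (0:ℝ) < (1 - δn) * ((1 - δp) / (2 * γp)) := mul_pos h1δn hnst0
  set M := Real.log (max (δp + γp / (2 * s)) 1 / ((3 + δp) / 4)) /
      ((1 - δn) * ((1 - δp) / (2 * γp))) with hMdef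
  have hM0 : 0 < M := by
    apply div_pos _ hd0
    apply Real.log_pos
    rw [one_lt_div hθ'0]
    exact lt_of_lt_of_le hθ'1 hK'1
  have hkey1 : max (δp + γp / (2 * s)) 1 *
      Real.exp (-(M * ((1 - δn) * ((1 - δp) / (2 * γp))))) = (3 + δp) / 4 := by
    have h1 : M * ((1 - δn) * ((1 - δp) / (2 * γp))) =
        Real.log (max (δp + γp / (2 * s)) 1 / ((3 + δp) / 4)) :=
      div_mul_cancel₀ _ hd0.ne'
    rw [h1, Real.exp_neg, Real.exp_log (div_pos hK'0 hθ'0)]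
    field_simp
  have hβ0 : 0 < Real.log ((7 + δp) / 8 / ((3 + δp) / 4)) := by
    apply Real.log_pos
    rw [one_lt_div hθ'0]
    linarith
  set P₀ := max 1 (Real.log (M * R / Real.log ((7 + δp) / 8 / ((3 + δp) / 4)))) with hP₀def
  have hP₀1 : (1:ℝ) ≤ P₀ := le_max_left _ _
  have hkey3 : M * R * Real.exp (-P₀) ≤ Real.log ((7 + δp) / 8 / ((3 + δp) / 4)) := by
    have h1 : Real.exp (Real.log (M * R / Real.log ((7 + δp) / 8 / ((3 + δp) / 4)))) ≤
        Real.exp P₀ := Real.exp_le_exp.2 (le_max_right _ _)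
    rw [Real.exp_log (by positivity)] at h1
    have h2 : M * R ≤ Real.exp P₀ * Real.log ((7 + δp) / 8 / ((3 + δp) / 4)) := by
      rw [div_le_iff₀ hβ0] at h1
      linarith
    rw [Real.exp_neg]
    calc M * R * (Real.exp P₀)⁻¹
        ≤ Real.exp P₀ * Real.log ((7 + δp) / 8 / ((3 + δp) / 4)) * (Real.exp P₀)⁻¹ :=
          mul_le_mul_of_nonneg_right h2 (inv_nonneg.2 (Real.exp_pos _).le)
      _ = Real.log ((7 + δp) / 8 / ((3 + δp) / 4)) * (Real.exp P₀ * (Real.exp P₀)⁻¹) := by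
          ring
      _ = Real.log ((7 + δp) / 8 / ((3 + δp) / 4)) := by
          rw [mul_inv_cancel₀ (Real.exp_pos _).ne', mul_one]
  clear_value M P₀
  set N := R / (1 - δn) + 1 with hNdef
  have hRn2 : δn * (R / (1 - δn)) = R / (1 - δn) - R := by field_simp; ring
  have hN0 : (0:ℝ) < N := by
    have : 0 < R / (1 - δn) := div_pos hR0 h1δn
    rw [hNdef]; linarith
  clear_value N
  set c' := (1 + P₀) * Real.exp (M * N) *
      (max (δp + γp / (2 * s)) 1 * Real.exp (M * R)) with hc'def
  have he3 : (1:ℝ) ≤ max (δp + γp / (2 * s)) 1 * Real.exp (M * R) := by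
    calc (1:ℝ) = 1 * 1 := (one_mul 1).symm
      _ ≤ max (δp + γp / (2 * s)) 1 * Real.exp (M * R) :=
          mul_le_mul hK'1 (Real.one_le_exp (mul_nonneg hM0.le hR0.le)) zero_le_one
            (zero_le_one.trans hK'1)
  have he12 : (1:ℝ) ≤ (1 + P₀) * Real.exp (M * N) := by
    calc (1:ℝ) = 1 * 1 := (one_mul 1).symm
      _ ≤ (1 + P₀) * Real.exp (M * N) :=
          mul_le_mul (by linarith) (Real.one_le_exp (mul_nonneg hM0.le hN0.le)) zero_le_one
            (by linarith)
  have hc'1 : (1:ℝ) ≤ c' := by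
    rw [hc'def]
    calc (1:ℝ) = 1 * 1 := (one_mul 1).symm
      _ ≤ (1 + P₀) * Real.exp (M * N) * (max (δp + γp / (2 * s)) 1 * Real.exp (M * R)) :=
          mul_le_mul he12 he3 zero_le_one (zero_le_one.trans he12)
  clear_value c'
  set B := {y : ℝ × ℝ | 0 ≤ y.1 ∧ 0 ≤ y.2 ∧ y.2 ≤ N ∧
      (1 + y.1) * Real.exp (M * y.2) ≤ c'} with hBdef
  -- basic facts about G
  have hG1 : ∀ y : ℝ × ℝ, 0 ≤ y.1 → 0 ≤ y.2 → 1 ≤ (1 + y.1) * Real.exp (M * y.2) := by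
    intro y h1 h2
    calc (1:ℝ) = 1 * 1 := (one_mul 1).symm
      _ ≤ (1 + y.1) * Real.exp (M * y.2) :=
          mul_le_mul (by linarith) (Real.one_le_exp (mul_nonneg hM0.le h2)) zero_le_one
            (by linarith)
  have hGbound : ∀ y : ℝ × ℝ, 0 ≤ y.1 → y.1 ≤ P₀ → y.2 ≤ N →
      (1 + y.1) * Real.exp (M * y.2) ≤ (1 + P₀) * Real.exp (M * N) := by
    intro y h1 h2 h3
    apply mul_le_mul (by linarith)
      (Real.exp_le_exp.2 (mul_le_mul_of_nonneg_left h3 hM0.le)) (Real.exp_pos _).le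
      (by linarith)
  -- strip invariance
  have hstrip : ∀ y : ℝ × ℝ, 0 ≤ y.1 → 0 ≤ y.2 → y.2 ≤ N →
      0 ≤ (f y).1 ∧ 0 ≤ (f y).2 ∧ (f y).2 ≤ N := by
    intro y h1 h2 h3
    obtain ⟨q1, q2⟩ := T_mem_Q (γn := γn) hδp0 hδn0 hγp hσ hR0 h1 h2
    rw [← hf] at q1 q2
    refine ⟨q1, q2, ?_⟩
    have h4 := T_snd_le (δp := δp) (γp := γp) hδn0 hγn hσ hR0 h1 h2
    rw [← hf] at h4
    have h5 : Real.exp (-y.1) ≤ 1 := Real.exp_le_one_iff.2 (by linarith)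
    have h6 : δn * y.2 ≤ δn * N := mul_le_mul_of_nonneg_left h3 hδn0.le
    have h7 : R * Real.exp (-y.1) ≤ R := mul_le_of_le_one_right hR0.le h5
    have h8 : δn * N + R ≤ N := by
      rw [hNdef]
      have h9 : δn * (R / (1 - δn) + 1) = (R / (1 - δn) - R) + δn := by
        rw [mul_add, hRn2]; ring
      linarith
    linarith
  -- invariance of B
  have hBinv : ∀ y ∈ B, f y ∈ B := by
    intro y hy
    obtain ⟨h1, h2, h3, h4⟩ := hy
    obtain ⟨q1, q2, q3⟩ := hstrip y h1 h2 h3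
    refine ⟨q1, q2, q3, ?_⟩
    by_cases hcase : P₀ ≤ y.1
    · have hsm : M * R * Real.exp (-y.1) ≤ Real.log ((7 + δp) / 8 / ((3 + δp) / 4)) := by
        have h9 := Real.exp_le_exp.2 (neg_le_neg hcase)
        have h10 : M * R * Real.exp (-y.1) ≤ M * R * Real.exp (-P₀) :=
          mul_le_mul_of_nonneg_left h9 (mul_nonneg hM0.le hR0.le)
        linarith [hkey3]
      have hcon := G_step_contract hδp0 hδp1 hδn0 hδn1 hγp hγn hσ hR0 hs0 hs2 hM0 hkey1
        (hP₀1.trans hcase) h2 hsm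
      rw [← hf] at hcon
      have hGy0 : (0:ℝ) ≤ (1 + y.1) * Real.exp (M * y.2) :=
        mul_nonneg (by linarith) (Real.exp_pos _).le
      have h11 : (7 + δp) / 8 * ((1 + y.1) * Real.exp (M * y.2)) ≤
          1 * ((1 + y.1) * Real.exp (M * y.2)) :=
        mul_le_mul_of_nonneg_right hρ1.le hGy0
      have h12 : 1 * ((1 + y.1) * Real.exp (M * y.2)) = (1 + y.1) * Real.exp (M * y.2) :=
        one_mul _
      linarith
    · push_neg at hcase
      have hgen := G_step_gen hδp0 hδn0 hδn1 hγp hγn hσ hR0 hs0 hs2 hM0 h1 h2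
      rw [← hf] at hgen
      have hb := hGbound y h1 hcase.le h3
      calc (1 + (f y).1) * Real.exp (M * (f y).2)
          ≤ max (δp + γp / (2 * s)) 1 * Real.exp (M * R) *
              ((1 + y.1) * Real.exp (M * y.2)) := hgen
        _ ≤ max (δp + γp / (2 * s)) 1 * Real.exp (M * R) *
              ((1 + P₀) * Real.exp (M * N)) := by
            apply mul_le_mul_of_nonneg_left hb (by positivity)
        _ = c' := by rw [hc'def]; ring
  have hfB : f '' B ⊆ B := Set.image_subset_iff.2 hBinv
  -- compactness of B
  have hBclosed : IsClosed B := by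
    have hGc : Continuous fun y : ℝ × ℝ => (1 + y.1) * Real.exp (M * y.2) := by
      apply Continuous.mul
      · exact continuous_const.add continuous_fst
      · exact Real.continuous_exp.comp (continuous_const.mul continuous_snd)
    have hEq : B = {y : ℝ × ℝ | 0 ≤ y.1} ∩ ({y : ℝ × ℝ | 0 ≤ y.2} ∩
        ({y : ℝ × ℝ | y.2 ≤ N} ∩ {y : ℝ × ℝ | (1 + y.1) * Real.exp (M * y.2) ≤ c'})) := rfl
    rw [hEq]
    exact (isClosed_le continuous_const continuous_fst).inter
      ((isClosed_le continuous_const continuous_snd).inter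
        ((isClosed_le continuous_snd continuous_const).inter
          (isClosed_le hGc continuous_const)))
  have hBco : IsCompact B := by
    apply IsCompact.of_isClosed_subset ((isCompact_Icc (a := (0:ℝ)) (b := c')).prod (isCompact_Icc (a := (0:ℝ)) (b := N)))
      hBclosed
    intro y hy
    obtain ⟨h1, h2, h3, h4⟩ := hy
    have h5 : 1 + y.1 ≤ c' := by
      have he := Real.one_le_exp (mul_nonneg hM0.le h2)
      have h6 : (1 + y.1) * 1 ≤ (1 + y.1) * Real.exp (M * y.2) :=
        mul_le_mul_of_nonneg_left he (by linarith)
      rw [mul_one] at h6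
      linarith
    exact ⟨⟨h1, by linarith⟩, h2, h3⟩
  -- connectedness of B
  have h0B : (0 : ℝ × ℝ) ∈ B := by
    refine ⟨le_refl _, le_refl _, hN0.le, ?_⟩
    simp only [Prod.fst_zero, Prod.snd_zero, mul_zero, Real.exp_zero, add_zero, mul_one]
    linarith
  have hBconn : IsConnected B := by
    have hstar : StarConvex ℝ (0 : ℝ × ℝ) B := by
      intro y hy a b ha hb hab
      obtain ⟨h1, h2, h3, h4⟩ := hy
      have hb1 : b ≤ 1 := by linarith
      rw [smul_zero, zero_add]
      have hy1 : (b • y).1 = b * y.1 := rfl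
      have hy2 : (b • y).2 = b * y.2 := rfl
      refine ⟨?_, ?_, ?_, ?_⟩
      · rw [hy1]; exact mul_nonneg hb h1
      · rw [hy2]; exact mul_nonneg hb h2
      · rw [hy2]; exact (mul_le_of_le_one_left h2 hb1).trans h3
      · rw [hy1, hy2]
        have e1 : 1 + b * y.1 ≤ 1 + y.1 := by linarith [mul_le_of_le_one_left h1 hb1]
        have e2 : Real.exp (M * (b * y.2)) ≤ Real.exp (M * y.2) :=
          Real.exp_le_exp.2 (mul_le_mul_of_nonneg_left (mul_le_of_le_one_left h2 hb1) hM0.le)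
        calc (1 + b * y.1) * Real.exp (M * (b * y.2))
            ≤ (1 + y.1) * Real.exp (M * y.2) := by
              apply mul_le_mul e1 e2 (Real.exp_pos _).le (by linarith [mul_nonneg hb h1])
          _ ≤ c' := h4
    haveI := hstar.contractibleSpace ⟨0, h0B⟩
    exact isConnected_iff_connectedSpace.2 inferInstance
  -- continuity of f on B
  have hden : ∀ y : ℝ × ℝ, (1 + σ * y.2 ^ 2) ≠ 0 := fun y =>
    (by positivity : (0:ℝ) < 1 + σ * y.2 ^ 2).ne'
  have hfcont : ContinuousOn f B := by
    rw [hf]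
    show ContinuousOn (fun x : ℝ × ℝ =>
      (δp * x.1 + γp * x.1 * x.2 / (1 + σ * x.2 ^ 2),
       δn * x.2 * Real.exp (-(γn * x.1) / (1 + σ * x.2 ^ 2))
         + R * x.2 * Real.exp (-x.1) / (1 + x.2))) B
    apply ContinuousOn.prodMk
    · apply Continuous.continuousOn
      exact (continuous_const.mul continuous_fst).add
        (((continuous_const.mul continuous_fst).mul continuous_snd).div
          (continuous_const.add (continuous_const.mul (continuous_snd.pow 2))) hden)
    · apply ContinuousOn.add
      · apply Continuous.continuousOn
        exact (continuous_const.mul continuous_snd).mul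
          (Real.continuous_exp.comp (((continuous_const.mul continuous_fst).neg).div
            (continuous_const.add (continuous_const.mul (continuous_snd.pow 2))) hden))
      · apply ContinuousOn.div
        · exact ((continuous_const.mul continuous_snd).mul
            (Real.continuous_exp.comp continuous_fst.neg)).continuousOn
        · exact (continuous_const.add continuous_snd).continuousOn
        · intro y hy
          exact (by linarith [hy.2.1] : (0:ℝ) < 1 + y.2).ne'
  -- absorption
  have horbit : ∀ x : ℝ × ℝ, 0 ≤ x.1 → 0 ≤ x.2 → ∃ m₀ : ℕ, f^[m₀] x ∈ B := by
    intro x hx1 hx2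
    have hQ : ∀ m, 0 ≤ (f^[m] x).1 ∧ 0 ≤ (f^[m] x).2 := by
      intro m
      induction m with
      | zero => exact ⟨hx1, hx2⟩
      | succ m ih =>
          rw [Function.iterate_succ_apply']
          have := T_mem_Q (γn := γn) hδp0 hδn0 hγp hσ hR0 ih.1 ih.2
          rwa [← hf] at this
    have hn : ∀ m, (f^[m] x).2 ≤ δn ^ m * x.2 + R / (1 - δn) := by
      intro m
      induction m with
      | zero =>
          simp only [Function.iterate_zero_apply, pow_zero, one_mul]
          have : 0 < R / (1 - δn) := div_pos hR0 h1δn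
          linarith
      | succ m ih =>
          rw [Function.iterate_succ_apply']
          have h4 := T_snd_le (δp := δp) (γp := γp) hδn0 hγn hσ hR0 (hQ m).1 (hQ m).2
          rw [← hf] at h4
          have h5 : Real.exp (-(f^[m] x).1) ≤ 1 := Real.exp_le_one_iff.2 (by linarith [(hQ m).1])
          have h6 : R * Real.exp (-(f^[m] x).1) ≤ R := mul_le_of_le_one_right hR0.le h5
          have h7 : δn * (f^[m] x).2 ≤ δn * (δn ^ m * x.2 + R / (1 - δn)) :=
            mul_le_mul_of_nonneg_left ih hδn0.le
          have h8 : δn ^ (m + 1) = δn * δn ^ m := by ring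
          have h9 : δn * (δn ^ m * x.2 + R / (1 - δn)) =
              δn * δn ^ m * x.2 + (R / (1 - δn) - R) := by
            rw [mul_add, hRn2]; ring
          rw [h8]
          linarith
    obtain ⟨m₁, hm₁⟩ : ∃ m₁ : ℕ, δn ^ m₁ * x.2 ≤ 1 := by
      obtain ⟨m₁, hm₁⟩ := exists_pow_lt_of_lt_one
        (show (0:ℝ) < 1 / (x.2 + 1) by positivity) hδn1
      refine ⟨m₁, ?_⟩
      have h1 : δn ^ m₁ * x.2 ≤ 1 / (x.2 + 1) * x.2 :=
        mul_le_mul_of_nonneg_right hm₁.le hx2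
      have h2 : 1 / (x.2 + 1) * x.2 ≤ 1 := by
        rw [div_mul_eq_mul_div, div_le_one (by linarith)]
        linarith
      linarith
    set y := f^[m₁] x with hy
    have hyQ1 : 0 ≤ y.1 := (hQ m₁).1
    have hyQ2 : 0 ≤ y.2 := (hQ m₁).2
    have hyN : y.2 ≤ N := by
      have := hn m₁
      rw [hNdef]
      linarith
    have hso : ∀ k, 0 ≤ (f^[k] y).1 ∧ 0 ≤ (f^[k] y).2 ∧ (f^[k] y).2 ≤ N := by
      intro k
      induction k with
      | zero => exact ⟨hyQ1, hyQ2, hyN⟩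
      | succ k ih =>
          rw [Function.iterate_succ_apply']
          exact hstrip _ ih.1 ih.2.1 ih.2.2
    by_cases hcase : ∀ k, P₀ ≤ (f^[k] y).1
    · exfalso
      have hGy0 : 0 < (1 + y.1) * Real.exp (M * y.2) := by positivity
      have hGdec : ∀ k, (1 + (f^[k] y).1) * Real.exp (M * (f^[k] y).2) ≤
          ((7 + δp) / 8) ^ k * ((1 + y.1) * Real.exp (M * y.2)) := by
        intro k
        induction k with
        | zero => simp
        | succ k ih =>
            rw [Function.iterate_succ_apply']
            have hsm : M * R * Real.exp (-(f^[k] y).1) ≤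
                Real.log ((7 + δp) / 8 / ((3 + δp) / 4)) := by
              have h9 := Real.exp_le_exp.2 (neg_le_neg (hcase k))
              have h10 : M * R * Real.exp (-(f^[k] y).1) ≤ M * R * Real.exp (-P₀) :=
                mul_le_mul_of_nonneg_left h9 (mul_nonneg hM0.le hR0.le)
              linarith [hkey3]
            have hcon := G_step_contract hδp0 hδp1 hδn0 hδn1 hγp hγn hσ hR0 hs0 hs2 hM0
              hkey1 (hP₀1.trans (hcase k)) (hso k).2.1 hsm
            rw [← hf] at hcon
            calc (1 + (f (f^[k] y)).1) * Real.exp (M * (f (f^[k] y)).2)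
                ≤ (7 + δp) / 8 * ((1 + (f^[k] y).1) * Real.exp (M * (f^[k] y).2)) := hcon
              _ ≤ (7 + δp) / 8 * (((7 + δp) / 8) ^ k * ((1 + y.1) * Real.exp (M * y.2))) :=
                  mul_le_mul_of_nonneg_left ih hρ0.le
              _ = ((7 + δp) / 8) ^ (k + 1) * ((1 + y.1) * Real.exp (M * y.2)) := by ring
      obtain ⟨k, hk⟩ := exists_pow_lt_of_lt_one
        (show (0:ℝ) < 1 / ((1 + y.1) * Real.exp (M * y.2)) by positivity) hρ1
      have hlt : ((7 + δp) / 8) ^ k * ((1 + y.1) * Real.exp (M * y.2)) < 1 := by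
        have := mul_lt_mul_of_pos_right hk hGy0
        rwa [one_div, inv_mul_cancel₀ hGy0.ne'] at this
      have hge := hG1 _ (hso k).1 (hso k).2.1
      linarith [hGdec k]
    · push_neg at hcase
      obtain ⟨k, hk⟩ := hcase
      refine ⟨k + m₁, ?_⟩
      rw [Function.iterate_add_apply, ← hy]
      refine ⟨(hso k).1, (hso k).2.1, (hso k).2.2, ?_⟩
      have hb := hGbound _ (hso k).1 hk.le (hso k).2.2
      calc (1 + (f^[k] y).1) * Real.exp (M * (f^[k] y).2)
          ≤ (1 + P₀) * Real.exp (M * N) := hb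
        _ ≤ c' := by
            rw [hc'def]
            exact le_mul_of_one_le_right
              (mul_nonneg (by linarith) (Real.exp_pos _).le) he3
  -- apply abstract theory
  obtain ⟨A, hAB, hAco, hAconn, hAinv, hAattr⟩ :=
    abstract_attractor f B hBco hBconn hfcont hfB
  refine ⟨A, fun a ha => ⟨(hAB ha).1, (hAB ha).2.1⟩, hAco, hAconn, hf ▸ hAinv, ?_⟩
  intro x hx1 hx2
  haveI : Nonempty A := hAconn.nonempty.to_subtype
  rw [Metric.tendsto_atTop]
  intro ε hε
  obtain ⟨m₂, hm₂⟩ := hAattr (ε / 2) (by linarith)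
  obtain ⟨m₁, hm₁⟩ := horbit x hx1 hx2
  refine ⟨m₂ + m₁, fun m hm => ?_⟩
  have hiter : f^[m] x = f^[m - m₁] (f^[m₁] x) := by
    rw [← Function.iterate_add_apply]
    congr 1
    omega
  have hz : f^[m] x ∈ f^[m - m₁] '' B := hiter ▸ Set.mem_image_of_mem _ hm₁
  have hthk : f^[m] x ∈ Metric.thickening (ε / 2) A := hm₂ (m - m₁) (by omega) hz
  rw [Metric.mem_thickening_iff] at hthk
  obtain ⟨a, haA, hdist⟩ := hthk
  have h01 : |(f^[m] x).1 - a.1| ≤ dist (f^[m] x) a := by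
    rw [Prod.dist_eq, ← Real.dist_eq]
    exact le_max_left _ _
  have h02 : |(f^[m] x).2 - a.2| ≤ dist (f^[m] x) a := by
    rw [Prod.dist_eq, ← Real.dist_eq]
    exact le_max_right _ _
  have hd0' : (0:ℝ) ≤ dist (f^[m] x) a := dist_nonneg
  have e1 : ((f^[m] x).1 - a.1) ^ 2 ≤ dist (f^[m] x) a ^ 2 := by
    rw [← sq_abs]
    exact pow_le_pow_left₀ (abs_nonneg _) h01 2
  have e2 : ((f^[m] x).2 - a.2) ^ 2 ≤ dist (f^[m] x) a ^ 2 := by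
    rw [← sq_abs]
    exact pow_le_pow_left₀ (abs_nonneg _) h02 2
  have hsq : ((f^[m] x).1 - a.1) ^ 2 + ((f^[m] x).2 - a.2) ^ 2 < ε ^ 2 := by
    have e3 : dist (f^[m] x) a ^ 2 < (ε / 2) ^ 2 := by
      rw [pow_two, pow_two]
      exact mul_self_lt_mul_self hd0' hdist
    have e4 : (0:ℝ) < ε ^ 2 := by positivity
    linarith
  have hbdd : BddBelow (Set.range fun b : A =>
      Real.sqrt (((f^[m] x).1 - (b : ℝ × ℝ).1) ^ 2 + ((f^[m] x).2 - (b : ℝ × ℝ).2) ^ 2)) := by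
    refine ⟨0, ?_⟩
    rintro v ⟨b, rfl⟩
    exact Real.sqrt_nonneg _
  have hle : (⨅ b : A, Real.sqrt (((f^[m] x).1 - (b : ℝ × ℝ).1) ^ 2 +
      ((f^[m] x).2 - (b : ℝ × ℝ).2) ^ 2)) ≤
      Real.sqrt (((f^[m] x).1 - a.1) ^ 2 + ((f^[m] x).2 - a.2) ^ 2) :=
    ciInf_le hbdd ⟨a, haA⟩
  have hnn : 0 ≤ ⨅ b : A, Real.sqrt (((f^[m] x).1 - (b : ℝ × ℝ).1) ^ 2 +
      ((f^[m] x).2 - (b : ℝ × ℝ).2) ^ 2) :=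
    le_ciInf fun b => Real.sqrt_nonneg _
  have hsqrt : Real.sqrt (((f^[m] x).1 - a.1) ^ 2 + ((f^[m] x).2 - a.2) ^ 2) < ε :=
    (Real.sqrt_lt' hε).2 hsq
  rw [Real.dist_0_eq_abs, abs_of_nonneg hnn]
  linarith
end
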